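/- arXiv:2310.00846 — 8 statements merged into one kernel-verified Lean document; each statement's English description precedes it below -/
import Mathlib

section
/- Let G be a simple graph on n vertices with adjacency matrix A whose walk matrix W(A) = [e, Ae, …, A^{n−1}e] is invertible. Then G is determined by its generalized spectrum (i.e., every simple graph H with det(xI−A(H))=det(xI−A) and det(xI−(J−I−A(H)))=det(xI−(J−I−A)) satisfies PᵀAP = A(H) for some permutation matrix P) if and only if every rational orthogonal matrix Q with Qe = e such that QᵀAQ is a symmetric 0-1 matrix with zero diagonal is a permutation matrix. -/
open Matrix Polynomial

/-- The walk matrix `[e, Ae, A²e, …, A^{n−1}e]` of an `n × n` real matrix `A`. -/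
def walkMatrix {n : ℕ} (A : Matrix (Fin n) (Fin n) ℝ) : Matrix (Fin n) (Fin n) ℝ :=
  Matrix.of fun i j => ((A ^ (j : ℕ)) *ᵥ fun _ => (1 : ℝ)) i

/-- A symmetric real 0-1 matrix with zero diagonal (adjacency matrix of a simple graph). -/
def IsAdjacencyMatrix {n : ℕ} (A : Matrix (Fin n) (Fin n) ℝ) : Prop :=
  A.IsSymm ∧ (∀ i, A i i = 0) ∧ ∀ i j, A i j = 0 ∨ A i j = 1

/-!
The generalized spectrum of `A` determines every walk count `eᵀAᵏe`: over `ℝ⟦t⟧` the matrix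
determinant lemma gives `det (1 - t(A - J)) = det (1 - tA) · (1 + t · ∑ₖ eᵀAᵏe tᵏ)`, and
`det (1 - tA)` is a unit. So if `B` is generalized cospectral with `A`, the Gram matrices
`W(B)ᵀW(B)` and `W(A)ᵀW(A)` (whose entries are the walk counts `eᵀA^{i+j}e`) agree, and
`P = W(B) W(A)⁻¹` is orthogonal, rational and maps `e` to `e`. Since `A` and `B` share their
characteristic polynomial, Cayley–Hamilton extends `P Aᵏe = Bᵏe` from `k < n` to all `k`, whence
`PA = BP`, i.e. `B = (Pᵀ)ᵀ A Pᵀ`.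

Conversely a regular orthogonal `Q` fixes `J`, so `QᵀAQ` is generalized cospectral with `A`; and
`Qᵀ W(A) = W(QᵀAQ)`, so when `W(A)` is invertible `Q` is determined by `QᵀAQ`.
-/

namespace Matrix

theorem ones_eq_vecMulVec {ι α : Type*} [MulOneClass α] :
    (of fun _ _ => 1 : Matrix ι ι α) = vecMulVec 1 1 := by
  ext i j
  simp [vecMulVec]

variable {ι R : Type*} [Fintype ι] [DecidableEq ι] [CommRing R]

open scoped PowerSeries

def resolventSeries (M : Matrix ι ι R) : Matrix ι ι R⟦X⟧ :=
  of fun i j => PowerSeries.mk fun k => (M ^ k) i j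

theorem one_sub_X_smul_mul_resolventSeries (M : Matrix ι ι R) :
    (1 - (PowerSeries.X : R⟦X⟧) • M.map PowerSeries.C) * resolventSeries M = 1 := by
  rw [Matrix.sub_mul, Matrix.one_mul, Matrix.smul_mul]
  ext i j k
  cases k with
  | zero => obtain rfl | h := eq_or_ne i j <;> simp [resolventSeries, *]
  | succ k =>
    simp [resolventSeries, Matrix.mul_apply, PowerSeries.coeff_succ_X_mul, map_sum,
      pow_succ', Matrix.one_apply, apply_ite]

theorem coe_charpolyRev (M : Matrix ι ι R) :
    (M.charpolyRev : R⟦X⟧) = det (1 - (PowerSeries.X : R⟦X⟧) • M.map PowerSeries.C) := by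
  rw [charpolyRev, ← Polynomial.coeToPowerSeries.ringHom_apply, RingHom.map_det]
  congr 1
  refine Matrix.ext fun i j => ?_
  simp [Matrix.one_apply, apply_ite, Polynomial.coeToPowerSeries.ringHom_apply]
  exact mul_comm _ _

theorem coe_charpolyRev_sub_vecMulVec (M : Matrix ι ι R) (u v : ι → R) :
    ((M - vecMulVec u v).charpolyRev : R⟦X⟧) =
      (M.charpolyRev : R⟦X⟧) * (1 + PowerSeries.X * PowerSeries.mk fun k => v ⬝ᵥ (M ^ k *ᵥ u)) := by
  set T : R⟦X⟧ := PowerSeries.X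
  set uC : ι → R⟦X⟧ := fun i => PowerSeries.C (u i)
  set vC : ι → R⟦X⟧ := fun i => PowerSeries.C (v i)
  have hfactor : 1 - T • (M - vecMulVec u v).map PowerSeries.C
      = (1 - T • M.map PowerSeries.C) * (1 + vecMulVec (T • (resolventSeries M *ᵥ uC)) vC) := by
    have hmap : (M - vecMulVec u v).map PowerSeries.C =
        M.map PowerSeries.C - vecMulVec uC vC := by
      ext i j : 1
      simp [vecMulVec, uC, vC]
    rw [Matrix.mul_add, Matrix.mul_one, mul_vecMulVec, mulVec_smul, mulVec_mulVec,
      one_sub_X_smul_mul_resolventSeries, one_mulVec, smul_vecMulVec, hmap, smul_sub]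
    abel
  have hseries : vC ⬝ᵥ (T • (resolventSeries M *ᵥ uC)) =
      T * PowerSeries.mk fun k => v ⬝ᵥ (M ^ k *ᵥ u) := by
    rw [dotProduct_smul, smul_eq_mul]
    congr 1
    ext k
    simp [vC, uC, dotProduct, mulVec, resolventSeries, map_sum, PowerSeries.coeff_C_mul,
      PowerSeries.coeff_mul_C]
  rw [coe_charpolyRev, coe_charpolyRev, hfactor, det_mul, vecMulVec_eq Unit,
    det_one_add_replicateCol_mul_replicateRow, hseries]

theorem dotProduct_pow_mulVec_eq_of_charpoly_eq {M N : Matrix ι ι R} {u v : ι → R}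
    (h : M.charpoly = N.charpoly)
    (h' : (M - vecMulVec u v).charpoly = (N - vecMulVec u v).charpoly) (k : ℕ) :
    v ⬝ᵥ (M ^ k *ᵥ u) = v ⬝ᵥ (N ^ k *ᵥ u) := by
  have hrev : M.charpolyRev = N.charpolyRev := by rw [← reverse_charpoly, h, reverse_charpoly]
  have hrev' : (M - vecMulVec u v).charpolyRev = (N - vecMulVec u v).charpolyRev := by
    rw [← reverse_charpoly, h', reverse_charpoly]
  have hunit : IsUnit (M.charpolyRev : R⟦X⟧) := by
    rw [PowerSeries.isUnit_iff_constantCoeff, Polynomial.constantCoeff_coe,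
      coeff_zero_eq_eval_zero, eval_charpolyRev]
    exact isUnit_one
  have key := coe_charpolyRev_sub_vecMulVec M u v
  rw [hrev', coe_charpolyRev_sub_vecMulVec, ← hrev] at key
  have hseries := PowerSeries.X_mul_cancel (add_left_cancel (hunit.mul_left_cancel key)).symm
  simpa using congrArg (PowerSeries.coeff k) hseries

theorem eval_charpoly_neg_one_sub (M : Matrix ι ι R) (t : R) :
    (-1 - M).charpoly.eval t = (-1) ^ Fintype.card ι * M.charpoly.eval (-t - 1) := by
  rw [eval_charpoly, eval_charpoly, ← det_neg]
  congr 1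
  simp only [map_sub, map_neg, map_one]
  abel

theorem charpoly_eq_of_charpoly_neg_one_sub_eq [IsDomain R] [Infinite R] {M N : Matrix ι ι R}
    (h : (-1 - M).charpoly = (-1 - N).charpoly) : M.charpoly = N.charpoly := by
  refine Polynomial.funext fun t => ?_
  have ht := congrArg (eval (-t - 1)) h
  rw [eval_charpoly_neg_one_sub, eval_charpoly_neg_one_sub, show -(-t - 1) - 1 = t by ring] at ht
  exact mul_left_cancel₀ (pow_ne_zero _ (neg_ne_zero.mpr one_ne_zero)) ht

theorem ones_dotProduct_pow_mulVec_eq_of_charpoly_eq [IsDomain R] [Infinite R]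
    {A B : Matrix ι ι R} (h : A.charpoly = B.charpoly)
    (h' : (of (fun _ _ => 1) - 1 - A).charpoly = (of (fun _ _ => 1) - 1 - B).charpoly)
    (k : ℕ) : 1 ⬝ᵥ (A ^ k *ᵥ 1) = 1 ⬝ᵥ (B ^ k *ᵥ 1) := by
  have hcompl : ∀ M : Matrix ι ι R, of (fun _ _ => 1) - 1 - M = -1 - (M - vecMulVec 1 1) := by
    intro M
    rw [ones_eq_vecMulVec]
    abel
  rw [hcompl, hcompl] at h'
  exact dotProduct_pow_mulVec_eq_of_charpoly_eq h (charpoly_eq_of_charpoly_neg_one_sub_eq h') k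

theorem mulVec_pow_mulVec_eq_of_charpoly_eq [Nontrivial R] {A B Q : Matrix ι ι R} {v w : ι → R}
    (hAB : A.charpoly = B.charpoly)
    (h : ∀ k < Fintype.card ι, Q *ᵥ (A ^ k *ᵥ v) = B ^ k *ᵥ w) (k : ℕ) :
    Q *ᵥ (A ^ k *ᵥ v) = B ^ k *ᵥ w := by
  cases isEmpty_or_nonempty ι
  · exact Subsingleton.elim _ _
  -- `Aᵏ = r(A)` and `Bᵏ = r(B)` for the same remainder `r = Xᵏ mod χ`, of degree `< card ι`
  have hdeg : (X ^ k %ₘ A.charpoly).natDegree < Fintype.card ι := by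
    simpa [charpoly_natDegree_eq_dim] using natDegree_modByMonic_lt (X ^ k) A.charpoly_monic
      fun h1 => Fintype.card_ne_zero (by rw [← charpoly_natDegree_eq_dim A, h1, natDegree_one])
  rw [pow_eq_aeval_mod_charpoly A, pow_eq_aeval_mod_charpoly B, ← hAB,
    aeval_eq_sum_range' hdeg, aeval_eq_sum_range' hdeg, sum_mulVec, sum_mulVec, mulVec_sum]
  refine Finset.sum_congr rfl fun i hi => ?_
  rw [smul_mulVec, smul_mulVec, mulVec_smul, h i (Finset.mem_range.mp hi)]

section Orthogonal

variable {Q : Matrix ι ι R}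

theorem charpoly_transpose_mul_mul (hQ : Qᵀ * Q = 1) (M : Matrix ι ι R) :
    (Qᵀ * M * Q).charpoly = M.charpoly := by
  rw [Matrix.mul_assoc, charpoly_mul_comm, Matrix.mul_assoc, mul_eq_one_comm.mp hQ,
    Matrix.mul_one]

theorem semiconjBy_transpose_mul_mul (hQ : Qᵀ * Q = 1) (M : Matrix ι ι R) :
    SemiconjBy Qᵀ M (Qᵀ * M * Q) := by
  rw [SemiconjBy, Matrix.mul_assoc, mul_eq_one_comm.mp hQ, Matrix.mul_one]

theorem transpose_mulVec_one (hQ : Qᵀ * Q = 1) (he : Q *ᵥ 1 = 1) : Qᵀ *ᵥ 1 = 1 := by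
  rw [← he, mulVec_mulVec, hQ, one_mulVec, he]

theorem transpose_mul_ones_sub_one_sub_mul (hQ : Qᵀ * Q = 1) (he : Q *ᵥ 1 = 1)
    (M : Matrix ι ι R) :
    Qᵀ * (of (fun _ _ => 1) - 1 - M) * Q = of (fun _ _ => 1) - 1 - Qᵀ * M * Q := by
  rw [Matrix.mul_sub, Matrix.mul_sub, Matrix.sub_mul, Matrix.sub_mul, Matrix.mul_one, hQ,
    ones_eq_vecMulVec, mul_vecMulVec, vecMulVec_mul, ← mulVec_transpose,
    transpose_mulVec_one hQ he]

theorem transpose_mul_self_eq_one_of_gram_eq {X Y : Matrix ι ι R} (hX : IsUnit X.det)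
    (h : Yᵀ * Y = Xᵀ * X) : (Y * X⁻¹)ᵀ * (Y * X⁻¹) = 1 := by
  rw [transpose_mul, Matrix.mul_assoc, ← Matrix.mul_assoc Yᵀ, h, ← Matrix.mul_assoc,
    ← Matrix.mul_assoc, transpose_nonsing_inv, nonsing_inv_mul _ (by rwa [det_transpose]),
    Matrix.one_mul, mul_nonsing_inv _ hX]

end Orthogonal

theorem permMatrix_transpose_mul_self (σ : Equiv.Perm ι) :
    (σ.permMatrix R)ᵀ * σ.permMatrix R = 1 := by
  rw [transpose_permMatrix, ← permMatrix_mul, mul_inv_cancel, permMatrix_one]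

theorem permMatrix_mulVec_one (σ : Equiv.Perm ι) : σ.permMatrix R *ᵥ 1 = 1 := by
  rw [permMatrix_mulVec]
  rfl

end Matrix

theorem RingHom.mapMatrix_inv {ι K L : Type*} [Fintype ι] [DecidableEq ι] [Field K] [Field L]
    (f : K →+* L) (M : Matrix ι ι K) : f.mapMatrix M⁻¹ = (f.mapMatrix M)⁻¹ := by
  rw [Matrix.inv_def, Matrix.inv_def, ← RingHom.map_adjugate, ← RingHom.map_det]
  ext i j
  simp [Ring.inverse_eq_inv']

section WalkMatrix

variable {n : ℕ} {A B P : Matrix (Fin n) (Fin n) ℝ}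

theorem IsAdjacencyMatrix.mem_range_ratCast (hA : IsAdjacencyMatrix A) :
    A ∈ (Rat.castHom ℝ).mapMatrix.range := by
  classical
  refine ⟨of fun i j => if A i j = 1 then 1 else 0, ?_⟩
  ext i j
  rcases hA.2.2 i j with h | h <;> simp [h]

theorem walkMatrix_mem_range_ratCast (hA : A ∈ (Rat.castHom ℝ).mapMatrix.range) :
    walkMatrix A ∈ (Rat.castHom ℝ).mapMatrix.range := by
  obtain ⟨A₀, rfl⟩ := hA
  refine ⟨of fun i j => (A₀ ^ (j : ℕ) *ᵥ 1) i, ?_⟩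
  ext i j
  simp only [walkMatrix, ← map_pow]
  simp [mulVec, dotProduct]

theorem transpose_walkMatrix_mul_walkMatrix_apply (hA : A.IsSymm) (i j : Fin n) :
    ((walkMatrix A)ᵀ * walkMatrix A) i j = 1 ⬝ᵥ (A ^ ((i : ℕ) + j) *ᵥ 1) := by
  change (A ^ (i : ℕ) *ᵥ 1) ⬝ᵥ (A ^ (j : ℕ) *ᵥ 1) = _
  rw [← (hA.pow i).eq, mulVec_transpose, ← dotProduct_mulVec, mulVec_mulVec, pow_add]

theorem transpose_walkMatrix_mul_walkMatrix_eq (hA : A.IsSymm) (hB : B.IsSymm)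
    (h : ∀ k, 1 ⬝ᵥ (A ^ k *ᵥ 1) = 1 ⬝ᵥ (B ^ k *ᵥ 1)) :
    (walkMatrix A)ᵀ * walkMatrix A = (walkMatrix B)ᵀ * walkMatrix B := by
  ext i j
  rw [transpose_walkMatrix_mul_walkMatrix_apply hA, transpose_walkMatrix_mul_walkMatrix_apply hB,
    h]

theorem mul_walkMatrix_of_semiconjBy (h : SemiconjBy P A B) (he : P *ᵥ 1 = 1) :
    P * walkMatrix A = walkMatrix B := by
  ext i j
  change (P *ᵥ (A ^ (j : ℕ) *ᵥ 1)) i = (B ^ (j : ℕ) *ᵥ 1) i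
  rw [mulVec_mulVec, (h.pow_right j).eq, ← mulVec_mulVec, he]

theorem mulVec_pow_mulVec_of_mul_walkMatrix (hAB : A.charpoly = B.charpoly)
    (hP : P * walkMatrix A = walkMatrix B) (k : ℕ) : P *ᵥ (A ^ k *ᵥ 1) = B ^ k *ᵥ 1 :=
  mulVec_pow_mulVec_eq_of_charpoly_eq hAB
    (fun k hk => funext fun i => congrFun₂ hP i ⟨k, by simpa using hk⟩) k

theorem semiconjBy_of_mul_walkMatrix (hW : (walkMatrix A).det ≠ 0)
    (hAB : A.charpoly = B.charpoly) (hP : P * walkMatrix A = walkMatrix B) :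
    SemiconjBy P A B := by
  have hcol := mulVec_pow_mulVec_of_mul_walkMatrix hAB hP
  refine ((isUnit_iff_isUnit_det _).mpr hW.isUnit).mul_right_cancel ?_
  ext i j
  change ((P * A) *ᵥ (A ^ (j : ℕ) *ᵥ 1)) i = ((B * P) *ᵥ (A ^ (j : ℕ) *ᵥ 1)) i
  rw [← mulVec_mulVec, ← mulVec_mulVec, mulVec_mulVec _ A, ← pow_succ', hcol, hcol,
    mulVec_mulVec, ← pow_succ']

theorem eq_of_transpose_mul_mul_eq (hW : (walkMatrix A).det ≠ 0) {Q : Matrix (Fin n) (Fin n) ℝ}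
    (hQ : Qᵀ * Q = 1) (hQe : Q *ᵥ 1 = 1) (hP : Pᵀ * P = 1) (hPe : P *ᵥ 1 = 1)
    (h : Qᵀ * A * Q = Pᵀ * A * P) : Q = P := by
  have hQW := mul_walkMatrix_of_semiconjBy (semiconjBy_transpose_mul_mul hQ A)
    (transpose_mulVec_one hQ hQe)
  have hPW := mul_walkMatrix_of_semiconjBy (semiconjBy_transpose_mul_mul hP A)
    (transpose_mulVec_one hP hPe)
  rw [h, ← hPW] at hQW
  exact transpose_inj.mp (((isUnit_iff_isUnit_det _).mpr hW.isUnit).mul_right_cancel hQW)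

theorem exists_rat_orthogonal_of_generalized_cospectral (hA : IsAdjacencyMatrix A)
    (hB : IsAdjacencyMatrix B) (hW : (walkMatrix A).det ≠ 0) (h : A.charpoly = B.charpoly)
    (h' : (of (fun _ _ => 1) - 1 - A).charpoly = (of (fun _ _ => 1) - 1 - B).charpoly) :
    ∃ Q : Matrix (Fin n) (Fin n) ℝ, Qᵀ * Q = 1 ∧ Q *ᵥ 1 = 1 ∧
      (∀ i j, ∃ q : ℚ, Q i j = q) ∧ Qᵀ * A * Q = B := by
  have hgram := transpose_walkMatrix_mul_walkMatrix_eq hB.1 hA.1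
    fun k => (ones_dotProduct_pow_mulVec_eq_of_charpoly_eq h h' k).symm
  have hWA : IsUnit (walkMatrix A).det := hW.isUnit
  set P := walkMatrix B * (walkMatrix A)⁻¹
  have hPW : P * walkMatrix A = walkMatrix B := by
    rw [Matrix.mul_assoc, nonsing_inv_mul _ hWA, Matrix.mul_one]
  have hP : Pᵀ * P = 1 := transpose_mul_self_eq_one_of_gram_eq hWA hgram
  have hPe : P *ᵥ 1 = 1 := by simpa using mulVec_pow_mulVec_of_mul_walkMatrix h hPW 0
  obtain ⟨P₀, hP₀⟩ : P ∈ (Rat.castHom ℝ).mapMatrix.range := by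
    obtain ⟨W₀, hW₀⟩ := walkMatrix_mem_range_ratCast hA.mem_range_ratCast
    exact mul_mem (walkMatrix_mem_range_ratCast hB.mem_range_ratCast)
      ⟨W₀⁻¹, by rw [RingHom.mapMatrix_inv, hW₀]⟩
  refine ⟨Pᵀ, by rw [transpose_transpose]; exact mul_eq_one_comm.mp hP,
    transpose_mulVec_one hP hPe, fun i j => ⟨P₀ j i, by rw [← hP₀]; rfl⟩, ?_⟩
  rw [transpose_transpose, (semiconjBy_of_mul_walkMatrix hW h hPW).eq, Matrix.mul_assoc,
    mul_eq_one_comm.mp hP, Matrix.mul_one]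

end WalkMatrix

theorem stmt5 {n : ℕ} (A : Matrix (Fin n) (Fin n) ℝ)
    (hA : IsAdjacencyMatrix A)
    (hW : (walkMatrix A).det ≠ 0) :
    (∀ B : Matrix (Fin n) (Fin n) ℝ, IsAdjacencyMatrix B →
        B.charpoly = A.charpoly →
        ((Matrix.of fun _ _ => (1 : ℝ)) - 1 - B).charpoly
          = ((Matrix.of fun _ _ => (1 : ℝ)) - 1 - A).charpoly →
        ∃ σ : Equiv.Perm (Fin n), (σ.permMatrix ℝ)ᵀ * A * σ.permMatrix ℝ = B)
    ↔ (∀ Q : Matrix (Fin n) (Fin n) ℝ,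
        Qᵀ * Q = 1 → (Q *ᵥ fun _ => (1 : ℝ)) = (fun _ => (1 : ℝ)) →
        (∀ i j, ∃ q : ℚ, Q i j = (q : ℝ)) →
        IsAdjacencyMatrix (Qᵀ * A * Q) →
        ∃ σ : Equiv.Perm (Fin n), Q = σ.permMatrix ℝ) := by
  constructor
  · intro hDGS Q hQ hQe _ hQA
    obtain ⟨σ, hσ⟩ := hDGS _ hQA (charpoly_transpose_mul_mul hQ A) (by
      rw [← transpose_mul_ones_sub_one_sub_mul hQ hQe, charpoly_transpose_mul_mul hQ])
    exact ⟨σ, eq_of_transpose_mul_mul_eq hW hQ hQe (permMatrix_transpose_mul_self σ)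
      (permMatrix_mulVec_one σ) hσ.symm⟩
  · intro hperm B hB h h'
    obtain ⟨Q, hQ, hQe, hQrat, rfl⟩ :=
      exists_rat_orthogonal_of_generalized_cospectral hA hB hW h.symm h'.symm
    obtain ⟨σ, rfl⟩ := hperm Q hQ hQe hQrat hB
    exact ⟨σ, rfl⟩
end

section
/- Let m ≥ 1 and let M and M̃ be m×m integer matrices with all entries in {−1,0,1}, and set n = 2m, A = [[0, M],[Mᵀ, 0]] and Ã = [[0, M̃],[M̃ᵀ, 0]]. Suppose the characteristic polynomial of A is irreducible over ℚ. Then there is at most one n×n rational orthogonal matrix Q with Qe = e such that QᵀAQ = Ã. -/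
open Matrix Polynomial

lemma aux_comm_eq_one {ι : Type*} [Fintype ι] [DecidableEq ι]
    (A R : Matrix ι ι ℚ) (hcomm : A * R = R * A)
    (e : ι → ℚ) (he : e ≠ 0) (hRe : R *ᵥ e = e)
    (hirr : Irreducible A.charpoly) : R = 1 := by
  classical
  set N := Fintype.card ι with hN
  set p := A.charpoly with hp
  -- R commutes with every polynomial in A
  have hRA : Commute R A := hcomm.symm
  have hcpoly : ∀ q : ℚ[X], Commute R (aeval A q) := by
    intro q
    induction q using Polynomial.induction_on' with
    | add a b ha hb => rw [map_add]; exact ha.add_right hb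
    | monomial n a =>
        rw [aeval_monomial]
        exact (Algebra.commute_algebraMap_right a R).mul_right (hRA.pow_right n)
  -- the annihilator ideal of e
  let I : Ideal ℚ[X] :=
  { carrier := {q | (aeval A q) *ᵥ e = 0}
    add_mem' := by
      intro a b ha hb
      simp only [Set.mem_setOf_eq, map_add, Matrix.add_mulVec] at *
      rw [ha, hb, add_zero]
    zero_mem' := by simp
    smul_mem' := by
      intro c q hq
      simp only [Set.mem_setOf_eq, smul_eq_mul, _root_.map_mul] at *
      rw [← Matrix.mulVec_mulVec, hq, Matrix.mulVec_zero] }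
  have hpI : p ∈ I := by
    show (aeval A p) *ᵥ e = 0
    rw [hp, Matrix.aeval_self_charpoly, Matrix.zero_mulVec]
  have hItop : I ≠ ⊤ := by
    intro h
    have h1 : (1 : ℚ[X]) ∈ I := h ▸ Submodule.mem_top
    have : (aeval A (1:ℚ[X])) *ᵥ e = 0 := h1
    rw [_root_.map_one, Matrix.one_mulVec] at this
    exact he this
  have hmax : (Ideal.span {p}).IsMaximal :=
    PrincipalIdealRing.isMaximal_of_irreducible hirr
  have hIe : I = Ideal.span {p} := by
    refine (hmax.eq_of_le hItop ?_).symm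
    rw [Ideal.span_le, Set.singleton_subset_iff]
    exact hpI
  -- φ : polynomials of degree < N inject into ι → ℚ
  let φ : Polynomial.degreeLT ℚ N →ₗ[ℚ] (ι → ℚ) :=
  { toFun := fun q => (aeval A (q : ℚ[X])) *ᵥ e
    map_add' := by intro a b; simp [Matrix.add_mulVec]
    map_smul' := by intro c q; simp [Matrix.smul_mulVec] }
  have hdegp : p.degree = (N : ℕ) := by
    rw [hp, Polynomial.degree_eq_natDegree A.charpoly_monic.ne_zero,
      Matrix.charpoly_natDegree_eq_dim]
  have hinj : Function.Injective φ := by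
    rw [injective_iff_map_eq_zero]
    rintro ⟨q, hq⟩ h0
    have hqI : q ∈ I := h0
    rw [hIe, Ideal.mem_span_singleton] at hqI
    by_contra hne
    have hqne : q ≠ 0 := fun h => hne (Subtype.ext h)
    have hle := Polynomial.degree_le_of_dvd hqI hqne
    rw [hdegp] at hle
    rw [Polynomial.mem_degreeLT] at hq
    exact absurd (lt_of_le_of_lt hle hq) (lt_irrefl _)
  have hrange : LinearMap.range φ = ⊤ := by
    apply Submodule.eq_top_of_finrank_eq
    rw [LinearMap.finrank_range_of_inj hinj,
      (Polynomial.degreeLTEquiv ℚ N).finrank_eq]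
    simp [hN]
  -- now show R *ᵥ w = w for all w
  have key : ∀ w : ι → ℚ, R *ᵥ w = w := by
    intro w
    obtain ⟨q, hq⟩ := LinearMap.range_eq_top.mp hrange w
    rw [← hq]
    show R *ᵥ ((aeval A (q : ℚ[X])) *ᵥ e) = (aeval A (q : ℚ[X])) *ᵥ e
    rw [Matrix.mulVec_mulVec, (hcpoly _).eq, ← Matrix.mulVec_mulVec, hRe]
  ext i j
  have := congrFun (key (Pi.single j 1)) i
  simpa [Matrix.mulVec_single, Matrix.one_apply, Pi.single_apply, eq_comm] using this

theorem stmt7 {m : ℕ} (hm : 1 ≤ m)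
    (M Mt : Matrix (Fin m) (Fin m) ℤ)
    (hM : ∀ i j, M i j = -1 ∨ M i j = 0 ∨ M i j = 1)
    (hMt : ∀ i j, Mt i j = -1 ∨ Mt i j = 0 ∨ Mt i j = 1)
    (hirr : Irreducible
      ((Matrix.fromBlocks 0 M Mᵀ 0).charpoly.map (Int.castRingHom ℚ))) :
    ∀ Q Q' : Matrix (Fin m ⊕ Fin m) (Fin m ⊕ Fin m) ℚ,
      Qᵀ * Q = 1 → (Q *ᵥ fun _ => (1 : ℚ)) = (fun _ => (1 : ℚ)) →
      Qᵀ * (Matrix.fromBlocks 0 M Mᵀ 0).map ((↑) : ℤ → ℚ) * Q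
        = (Matrix.fromBlocks 0 Mt Mtᵀ 0).map ((↑) : ℤ → ℚ) →
      Q'ᵀ * Q' = 1 → (Q' *ᵥ fun _ => (1 : ℚ)) = (fun _ => (1 : ℚ)) →
      Q'ᵀ * (Matrix.fromBlocks 0 M Mᵀ 0).map ((↑) : ℤ → ℚ) * Q'
        = (Matrix.fromBlocks 0 Mt Mtᵀ 0).map ((↑) : ℤ → ℚ) →
      Q = Q' := by
  intro Q Q' hQo hQe hQA hQ'o hQ'e hQ'A
  set A : Matrix (Fin m ⊕ Fin m) (Fin m ⊕ Fin m) ℚ :=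
    (Matrix.fromBlocks 0 M Mᵀ 0).map ((↑) : ℤ → ℚ) with hA
  have hirrA : Irreducible A.charpoly := by
    have h : A.charpoly
        = ((Matrix.fromBlocks 0 M Mᵀ 0).charpoly).map (Int.castRingHom ℚ) :=
      Matrix.charpoly_map (Matrix.fromBlocks 0 M Mᵀ 0) (Int.castRingHom ℚ)
    rw [h]; exact hirr
  have hQQt : Q * Qᵀ = 1 := mul_eq_one_comm.mp hQo
  have hQ'Q't : Q' * Q'ᵀ = 1 := mul_eq_one_comm.mp hQ'o
  set e : Fin m ⊕ Fin m → ℚ := fun _ => 1 with he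
  set R := Q * Q'ᵀ with hR
  have hcomm : A * R = R * A := by
    have h1 : Qᵀ * A * Q = Q'ᵀ * A * Q' := by rw [hQA, hQ'A]
    calc A * R = (Q * Qᵀ) * A * (Q * Q'ᵀ) := by rw [hQQt, Matrix.one_mul]
    _ = Q * (Qᵀ * A * Q) * Q'ᵀ := by noncomm_ring
    _ = Q * (Q'ᵀ * A * Q') * Q'ᵀ := by rw [h1]
    _ = (Q * Q'ᵀ) * A * (Q' * Q'ᵀ) := by noncomm_ring
    _ = R * A := by rw [hQ'Q't, Matrix.mul_one]
  have hQ'te : Q'ᵀ *ᵥ e = e := by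
    conv_lhs => rw [← hQ'e]
    rw [Matrix.mulVec_mulVec, hQ'o, Matrix.one_mulVec]
  have hRe : R *ᵥ e = e := by
    rw [hR, ← Matrix.mulVec_mulVec, hQ'te, hQe]
  have hene : e ≠ 0 := by
    intro h
    have := congrFun h (Sum.inl ⟨0, hm⟩)
    simp [he] at this
  have hR1 : R = 1 := aux_comm_eq_one A R hcomm e hene hRe hirrA
  calc Q = Q * 1 := by rw [Matrix.mul_one]
  _ = Q * (Q'ᵀ * Q') := by rw [hQ'o]
  _ = R * Q' := by rw [hR, Matrix.mul_assoc]
  _ = Q' := by rw [hR1, Matrix.one_mul]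
end

section
/- Let A and Ã be n×n real symmetric matrices with det(xI−A)=det(xI−Ã) and det(xI−(J−I−A))=det(xI−(J−I−Ã)). Then for every real number λ that is not an eigenvalue of A (so that λI−A and λI−Ã are invertible), one has eᵀ(λI−A)^{−1}e = eᵀ(λI−Ã)^{−1}e. -/
/-! By the matrix determinant lemma, `eᵀ (λI - A)⁻¹ e = det (λI - A + J) / det (λI - A) - 1`.
The denominator is the characteristic polynomial of `A` at `λ`, and the numerator is, up to the
sign `(-1)ⁿ`, the characteristic polynomial of `J - I - A` at `-(λ + 1)`; so both agree for `A`
and `Ã`. -/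

open Matrix Polynomial

namespace Matrix

theorem of_const_one_eq_vecMulVec {ι R : Type*} [MulOneClass R] :
    (of fun _ _ => (1 : R) : Matrix ι ι R) = vecMulVec (fun _ => 1) (fun _ => 1) := by
  ext i j
  simp [vecMulVec_apply]

variable {ι R K : Type*} [Fintype ι] [DecidableEq ι]

section CommRing

variable [CommRing R]

theorem eval_charpoly_eq_det_smul_one_sub (M : Matrix ι ι R) (t : R) :
    M.charpoly.eval t = (t • (1 : Matrix ι ι R) - M).det := by
  rw [eval_charpoly, scalar_apply, smul_one_eq_diagonal]

theorem det_add_vecMulVec {M : Matrix ι ι R} (hM : IsUnit M.det) (u v : ι → R) :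
    (M + vecMulVec u v).det = M.det * (1 + v ⬝ᵥ (M⁻¹ *ᵥ u)) := by
  rw [vecMulVec_eq (ι := Unit), det_add_replicateCol_mul_replicateRow hM, Matrix.mul_assoc,
    ← replicateCol_mulVec, det_unique (1 + _ : Matrix Unit Unit R), add_apply, one_apply_eq,
    replicateRow_mul_replicateCol_apply]

theorem eval_charpoly_of_const_one_sub_one_sub (M : Matrix ι ι R) (t : R) :
    ((of fun _ _ => (1 : R)) - 1 - M).charpoly.eval (-(t + 1))
      = (-1) ^ Fintype.card ι * (t • (1 : Matrix ι ι R) - M + of fun _ _ => 1).det := by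
  rw [eval_charpoly_eq_det_smul_one_sub, ← det_neg]
  congr 1
  ext i j
  by_cases hij : i = j <;> simp [hij] <;> ring

end CommRing

theorem const_one_dotProduct_inv_mulVec_const_one [Field K] {N : Matrix ι ι K} (hN : N.det ≠ 0) :
    (fun _ => (1 : K)) ⬝ᵥ (N⁻¹ *ᵥ fun _ => 1) = (N + of fun _ _ => 1).det / N.det - 1 := by
  rw [of_const_one_eq_vecMulVec, det_add_vecMulVec hN.isUnit]
  field_simp
  ring

end Matrix

theorem stmt8_general {n : ℕ} (A At : Matrix (Fin n) (Fin n) ℝ)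
    (h1 : A.charpoly = At.charpoly)
    (h2 : ((Matrix.of fun _ _ => (1 : ℝ)) - 1 - A).charpoly
        = ((Matrix.of fun _ _ => (1 : ℝ)) - 1 - At).charpoly) :
    ∀ t : ℝ, (t • (1 : Matrix (Fin n) (Fin n) ℝ) - A).det ≠ 0 →
      (fun _ => (1 : ℝ)) ⬝ᵥ ((t • (1 : Matrix (Fin n) (Fin n) ℝ) - A)⁻¹ *ᵥ fun _ => (1 : ℝ))
        = (fun _ => (1 : ℝ)) ⬝ᵥ ((t • (1 : Matrix (Fin n) (Fin n) ℝ) - At)⁻¹ *ᵥ fun _ => (1 : ℝ)) := by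
  intro t ht
  have hdet : (t • (1 : Matrix (Fin n) (Fin n) ℝ) - A).det
      = (t • (1 : Matrix (Fin n) (Fin n) ℝ) - At).det := by
    simpa only [eval_charpoly_eq_det_smul_one_sub] using congrArg (eval t) h1
  have hdetJ : (t • (1 : Matrix (Fin n) (Fin n) ℝ) - A + of fun _ _ => 1).det
      = (t • (1 : Matrix (Fin n) (Fin n) ℝ) - At + of fun _ _ => 1).det := by
    have h := congrArg (eval (-(t + 1))) h2
    rw [eval_charpoly_of_const_one_sub_one_sub, eval_charpoly_of_const_one_sub_one_sub] at h
    exact mul_left_cancel₀ (pow_ne_zero _ (by norm_num)) h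
  rw [const_one_dotProduct_inv_mulVec_const_one ht,
    const_one_dotProduct_inv_mulVec_const_one (hdet ▸ ht), hdet, hdetJ]

theorem stmt8 {n : ℕ} (A At : Matrix (Fin n) (Fin n) ℝ)
    (hA : A.IsSymm) (hAt : At.IsSymm)
    (h1 : A.charpoly = At.charpoly)
    (h2 : ((Matrix.of fun _ _ => (1 : ℝ)) - 1 - A).charpoly
        = ((Matrix.of fun _ _ => (1 : ℝ)) - 1 - At).charpoly) :
    ∀ t : ℝ, (t • (1 : Matrix (Fin n) (Fin n) ℝ) - A).det ≠ 0 →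
      (fun _ => (1 : ℝ)) ⬝ᵥ ((t • (1 : Matrix (Fin n) (Fin n) ℝ) - A)⁻¹ *ᵥ fun _ => (1 : ℝ))
        = (fun _ => (1 : ℝ)) ⬝ᵥ ((t • (1 : Matrix (Fin n) (Fin n) ℝ) - At)⁻¹ *ᵥ fun _ => (1 : ℝ)) :=
  stmt8_general A At h1 h2
end

section
/- Let A be an n×n symmetric integer matrix whose characteristic polynomial is irreducible over ℚ. Then there exist polynomials φ₁, φ₂, …, φ_n with rational coefficients, each of degree less than n, such that for every real eigenvalue λ of A, the vector ξ = (φ₁(λ), φ₂(λ), …, φ_n(λ))ᵀ is nonzero and satisfies Aξ = λξ. -/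
/-!
The adjugate `B(X)` of the characteristic matrix `X • 1 - A` satisfies `(X • 1 - A) * B(X) = p(X) • 1`,
where `p` is the characteristic polynomial, so at every root `λ` of `p` each column of `B(λ)` is
annihilated by `λ • 1 - A`. The entries of `B` have degree `< n` and `B ≠ 0` because
`det B = p ^ (n - 1)`; a nonzero entry `q` is therefore coprime to the irreducible `p` of degree `n`,
so `q(λ) ≠ 0` and the corresponding column of `B(λ)` is an eigenvector.
-/

open Matrix Polynomial

namespace Matrix

variable {n R : Type*} [Fintype n] [DecidableEq n] [CommRing R]

theorem natDegree_det_le_sum (M : Matrix n n R[X]) (r : n → ℕ)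
    (h : ∀ i j, (M i j).natDegree ≤ r i) : M.det.natDegree ≤ ∑ i, r i := by
  rw [det_apply']
  refine natDegree_sum_le_of_forall_le _ _ fun σ _ => ?_
  calc (((Equiv.Perm.sign σ : ℤ) : R[X]) * ∏ i, M (σ i) i).natDegree
      ≤ ∑ i, (M (σ i) i).natDegree :=
        natDegree_mul_le.trans (by rw [natDegree_intCast, zero_add]; exact natDegree_prod_le _ _)
    _ ≤ ∑ i, r (σ i) := Finset.sum_le_sum fun i _ => h (σ i) i
    _ = ∑ i, r i := Equiv.sum_comp σ r

theorem natDegree_adjugate_charmatrix_le (M : Matrix n n R) (i j : n) :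
    (adjugate (charmatrix M) i j).natDegree ≤ Fintype.card n - 1 := by
  rw [adjugate_apply]
  refine (natDegree_det_le_sum _ (fun k => if k = j then 0 else 1) fun k l => ?_).trans ?_
  · by_cases hkj : k = j
    · subst hkj
      rw [updateRow_self, if_pos rfl]
      by_cases hli : l = i
      · subst hli; simp
      · simp [Pi.single_eq_of_ne hli]
    · rw [updateRow_ne hkj, if_neg hkj]
      exact (charmatrix_apply_natDegree_le k l).trans (by split_ifs <;> simp)
  · simp [Finset.sum_ite, Finset.filter_ne']

theorem degree_adjugate_charmatrix_lt (M : Matrix n n R) (i j : n) :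
    (adjugate (charmatrix M) i j).degree < Fintype.card n := by
  have : 0 < Fintype.card n := Fintype.card_pos_iff.mpr ⟨i⟩
  refine (degree_le_of_natDegree_le (natDegree_adjugate_charmatrix_le M i j)).trans_lt ?_
  exact_mod_cast Nat.sub_lt this one_pos

theorem adjugate_charmatrix_ne_zero [Nontrivial R] [Nonempty n] (M : Matrix n n R) :
    adjugate (charmatrix M) ≠ 0 := by
  intro h
  have := det_adjugate (charmatrix M)
  rw [h, det_zero] at this
  exact (M.charpoly_monic.pow _).ne_zero this.symm

theorem map_aeval_charmatrix {S : Type*} [CommRing S] [Algebra R S] (M : Matrix n n R) (x : S) :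
    (charmatrix M).map (aeval x) = scalar n x - M.map (algebraMap R S) := by
  ext i j
  by_cases h : i = j
  · subst h; simp
  · simp [h]

theorem mulVec_aeval_adjugate_charmatrix {S : Type*} [CommRing S] [Algebra R S]
    (M : Matrix n n R) {x : S} (hx : aeval x M.charpoly = 0) (j : n) :
    M.map (algebraMap R S) *ᵥ (fun i => aeval x (adjugate (charmatrix M) i j)) =
      x • fun i => aeval x (adjugate (charmatrix M) i j) := by
  have key : (scalar n x - M.map (algebraMap R S)) *
      (adjugate (charmatrix M)).map (aeval x) = 0 := by
    rw [← map_aeval_charmatrix, ← AlgHom.mapMatrix_apply, ← AlgHom.mapMatrix_apply, ← map_mul,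
      mul_adjugate]
    ext k l
    simp only [AlgHom.mapMatrix_apply, map_apply, smul_apply, one_apply, smul_eq_mul, mul_ite,
      mul_one, mul_zero, zero_apply]
    split_ifs
    exacts [hx, map_zero _]
  rw [sub_mul, sub_eq_zero, scalar_apply, ← smul_eq_diagonal_mul] at key
  funext k
  simpa [mul_apply, mulVec, dotProduct] using (congrFun (congrFun key k) j).symm

end Matrix

namespace Polynomial

theorem aeval_ne_zero_of_degree_lt_of_irreducible {K L : Type*} [Field K] [CommRing L]
    [Nontrivial L] [Algebra K L] {p q : K[X]} (hp : Irreducible p) (hq : q ≠ 0)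
    (hdeg : q.degree < p.degree) {x : L} (hx : aeval x p = 0) : aeval x q ≠ 0 := by
  have hcop : IsCoprime p q :=
    hp.coprime_iff_not_dvd.mpr fun hdvd => (degree_le_of_dvd hdvd hq).not_gt hdeg
  have := hcop.map (aeval x).toRingHom
  simp only [AlgHom.toRingHom_eq_coe, RingHom.coe_coe, hx, isCoprime_zero_left] at this
  exact this.ne_zero

end Polynomial

theorem stmt9_general {n : ℕ} (A : Matrix (Fin n) (Fin n) ℤ)
    (hirr : Irreducible (A.charpoly.map (Int.castRingHom ℚ))) :
    ∃ φ : Fin n → Polynomial ℚ,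
      (∀ i, (φ i).degree < n) ∧
      ∀ lam : ℝ, ((A.map ((↑) : ℤ → ℝ)).charpoly).IsRoot lam →
        (fun i => Polynomial.aeval lam (φ i)) ≠ 0 ∧
        (A.map ((↑) : ℤ → ℝ)) *ᵥ (fun i => Polynomial.aeval lam (φ i))
          = lam • fun i => Polynomial.aeval lam (φ i) := by
  set Aℚ := A.map (Int.castRingHom ℚ)
  rw [← charpoly_map] at hirr
  have : Nonempty (Fin n) := Fin.pos_iff_nonempty.mp (by simpa using hirr.natDegree_pos)
  have hAℝ : A.map ((↑) : ℤ → ℝ) = Aℚ.map (algebraMap ℚ ℝ) := by ext; simp [Aℚ]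
  obtain ⟨i₀, j₀, hij⟩ : ∃ i j, adjugate (charmatrix Aℚ) i j ≠ 0 := by
    by_contra! h
    exact adjugate_charmatrix_ne_zero Aℚ (Matrix.ext h)
  have hdeg i : (adjugate (charmatrix Aℚ) i j₀).degree < n := by
    simpa using degree_adjugate_charmatrix_lt Aℚ i j₀
  refine ⟨fun i => adjugate (charmatrix Aℚ) i j₀, hdeg, fun lam hroot => ?_⟩
  have hlam : aeval lam Aℚ.charpoly = 0 := by
    rwa [hAℝ, charpoly_map, IsRoot, eval_map_algebraMap] at hroot
  rw [hAℝ]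
  refine ⟨fun h => ?_, mulVec_aeval_adjugate_charmatrix Aℚ hlam j₀⟩
  refine aeval_ne_zero_of_degree_lt_of_irreducible hirr hij ?_ hlam (congrFun h i₀)
  simpa [charpoly_degree_eq_dim] using hdeg i₀

theorem stmt9 {n : ℕ} (A : Matrix (Fin n) (Fin n) ℤ)
    (hA : A.IsSymm)
    (hirr : Irreducible (A.charpoly.map (Int.castRingHom ℚ))) :
    ∃ φ : Fin n → Polynomial ℚ,
      (∀ i, (φ i).degree < n) ∧
      ∀ lam : ℝ, ((A.map ((↑) : ℤ → ℝ)).charpoly).IsRoot lam →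
        (fun i => Polynomial.aeval lam (φ i)) ≠ 0 ∧
        (A.map ((↑) : ℤ → ℝ)) *ᵥ (fun i => Polynomial.aeval lam (φ i))
          = lam • fun i => Polynomial.aeval lam (φ i) :=
  stmt9_general A hirr
end

section
/- Let M be an m×m integer matrix and let A = [[0, M],[Mᵀ, 0]] be the 2m×2m symmetric block matrix. If the characteristic polynomial of A is irreducible over ℚ, then the characteristic polynomial of MMᵀ and the characteristic polynomial of MᵀM are irreducible over ℚ. -/
open Matrix Polynomial

lemma aux_comp_unit {F : Type*} [Field F] {f : F[X]} (hu : IsUnit (f.comp (X ^ 2))) :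
    IsUnit f := by
  have h0 : f ≠ 0 := by rintro rfl; simp at hu
  have hd : f.natDegree = 0 := by
    have := Polynomial.natDegree_eq_zero_of_isUnit hu
    rw [natDegree_comp, natDegree_X_pow, Nat.mul_eq_zero] at this
    omega
  rw [Polynomial.eq_C_of_natDegree_eq_zero hd]
  refine isUnit_C.mpr (Ne.isUnit ?_)
  intro h
  apply h0
  rw [Polynomial.eq_C_of_natDegree_eq_zero hd, h, map_zero]

lemma aux_irred {F : Type*} [Field F] {p : F[X]} (h : Irreducible (p.comp (X ^ 2))) :
    Irreducible p := by
  constructor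
  · intro hu
    obtain ⟨r, hr, rfl⟩ := Polynomial.isUnit_iff.mp hu
    exact h.not_isUnit (by simpa using hu)
  · intro f g hfg
    rcases h.isUnit_or_isUnit (a := f.comp (X ^ 2)) (b := g.comp (X ^ 2))
      (by rw [hfg, mul_comp]) with hu | hu
    · exact Or.inl (aux_comp_unit hu)
    · exact Or.inr (aux_comp_unit hu)

theorem stmt12 {m : ℕ} (M : Matrix (Fin m) (Fin m) ℤ)
    (hirr : Irreducible
      ((Matrix.fromBlocks 0 M Mᵀ 0).charpoly.map (Int.castRingHom ℚ))) :
    Irreducible ((M * Mᵀ).charpoly.map (Int.castRingHom ℚ)) ∧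
    Irreducible ((Mᵀ * M).charpoly.map (Int.castRingHom ℚ)) := by
  -- move everything to ℚ
  set f := Int.castRingHom ℚ with hf
  set M' : Matrix (Fin m) (Fin m) ℚ := M.map f with hM'
  have hMt : Mᵀ.map ⇑f = M'ᵀ := Matrix.transpose_map
  set N : Matrix (Fin m ⊕ Fin m) (Fin m ⊕ Fin m) ℚ := fromBlocks 0 M' M'ᵀ 0 with hN
  have hmapN : (Matrix.fromBlocks 0 M Mᵀ 0).map ⇑f = N := by
    rw [hN]
    ext (i | i) (j | j) <;> simp [Matrix.fromBlocks, Matrix.map_apply, hM']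
  set a : ℚ[X] := N.charpoly with ha
  have hirr' : Irreducible a := by
    rw [ha, ← hmapN, Matrix.charpoly_map]
    exact hirr
  have hm : 0 < m := by
    rcases Nat.eq_zero_or_pos m with rfl | h
    · exfalso
      apply hirr'.not_isUnit
      have : a = 1 := by
        rw [ha, Matrix.charpoly, Matrix.det_isEmpty]
      rw [this]; exact isUnit_one
    · exact h
  set p : ℚ[X] := (M' * M'ᵀ).charpoly with hp
  set q : ℚ[X] := (M'ᵀ * M').charpoly with hq
  -- key determinant identity
  set P : Matrix (Fin m) (Fin m) ℚ[X] := M'.map C with hP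
  set S : Matrix (Fin m) (Fin m) ℚ[X] := Matrix.scalar (Fin m) X with hS
  have hA : charmatrix N = fromBlocks S (-P) (-Pᵀ) S := by
    rw [hN, charmatrix_fromBlocks]
    congr 1 <;> simp [hS, hP, charmatrix, Matrix.transpose_map]
  set D : Matrix (Fin m ⊕ Fin m) (Fin m ⊕ Fin m) ℚ[X] := fromBlocks 1 0 0 (-1) with hD
  set B : Matrix (Fin m ⊕ Fin m) (Fin m ⊕ Fin m) ℚ[X] := fromBlocks S P Pᵀ S with hB
  have hDD : D * D = 1 := by
    rw [hD, fromBlocks_multiply]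
    simp [← fromBlocks_one]
  have hBD : B = D * charmatrix N * D := by
    rw [hA, hD, fromBlocks_multiply, fromBlocks_multiply, hB]
    congr 1 <;> simp
  have hdetB : B.det = a := by
    rw [hBD, det_mul, det_mul]
    have h1 : D.det * D.det = 1 := by rw [← det_mul, hDD, det_one]
    calc D.det * (charmatrix N).det * D.det
        = D.det * D.det * (charmatrix N).det := by ring
      _ = a := by rw [h1, one_mul]; rfl
  set φ : ℚ[X] →+* ℚ[X] := eval₂RingHom C (X ^ 2) with hφ
  have hcm : ∀ K : Matrix (Fin m) (Fin m) ℚ, (charmatrix K).map ⇑φ = S * S - K.map C := by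
    intro K
    ext i j
    by_cases h : i = j
    · subst h
      simp [hφ, hS, Matrix.mul_apply, Matrix.scalar_apply, Matrix.diagonal_apply, sq,
        Finset.sum_ite_eq, Matrix.map_apply]
    · simp [hφ, hS, charmatrix_apply_ne _ _ _ h, Matrix.mul_apply, Matrix.scalar_apply,
        Matrix.diagonal_apply, Finset.sum_ite_eq, Matrix.map_apply, h]
  have hcomm : ∀ K : Matrix (Fin m) (Fin m) ℚ[X], S * K = K * S := by
    intro K
    exact (Matrix.scalar_commute X (fun r => Commute.all _ _) K).eq
  have htP : M'ᵀ.map (C : ℚ →+* ℚ[X]) = Pᵀ := by rw [hP, Matrix.transpose_map]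
  have hmul : charmatrix N * B =
      fromBlocks ((charmatrix (M' * M'ᵀ)).map ⇑φ) 0 0 ((charmatrix (M'ᵀ * M')).map ⇑φ) := by
    rw [hA, hB, fromBlocks_multiply, hcm, hcm, Matrix.map_mul, Matrix.map_mul, htP, ← hP]
    have e1 : S * S + -P * Pᵀ = S * S - P * Pᵀ := by rw [neg_mul, ← sub_eq_add_neg]
    have e2 : S * P + -P * S = 0 := by rw [neg_mul, hcomm P, add_neg_cancel]
    have e3 : -Pᵀ * S + S * Pᵀ = 0 := by rw [neg_mul, hcomm Pᵀ, neg_add_cancel]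
    have e4 : -Pᵀ * P + S * S = S * S - Pᵀ * P := by rw [neg_mul, add_comm, ← sub_eq_add_neg]
    rw [e1, e2, e3, e4]
  have hdet : ∀ K : Matrix (Fin m) (Fin m) ℚ,
      ((charmatrix K).map ⇑φ).det = K.charpoly.comp (X ^ 2) := by
    intro K
    rw [← RingHom.mapMatrix_apply, ← RingHom.map_det]
    rfl
  have key : a * a = p.comp (X ^ 2) * q.comp (X ^ 2) := by
    have h2 := congrArg Matrix.det hmul
    rw [det_mul, det_fromBlocks_zero₂₁, hdetB, hdet, hdet] at h2
    exact h2
  -- degree bookkeeping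
  have hamonic : a.Monic := Matrix.charpoly_monic N
  have hpmonic : p.Monic := Matrix.charpoly_monic _
  have hqmonic : q.Monic := Matrix.charpoly_monic _
  have hpcm : (p.comp (X ^ 2)).Monic := hpmonic.comp (monic_X_pow 2) (by simp)
  have hqcm : (q.comp (X ^ 2)).Monic := hqmonic.comp (monic_X_pow 2) (by simp)
  have hdega : a.natDegree = 2 * m := by
    rw [ha, Matrix.charpoly_natDegree_eq_dim]
    simp [two_mul]
  have hdegp : (p.comp (X ^ 2)).natDegree = 2 * m := by
    rw [natDegree_comp, natDegree_X_pow, hp, Matrix.charpoly_natDegree_eq_dim]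
    simp [mul_comm]
  have hdegq : (q.comp (X ^ 2)).natDegree = 2 * m := by
    rw [natDegree_comp, natDegree_X_pow, hq, Matrix.charpoly_natDegree_eq_dim]
    simp [mul_comm]
  have hprime : Prime a := hirr'.prime
  have hdvd : a ∣ p.comp (X ^ 2) ∨ a ∣ q.comp (X ^ 2) :=
    hprime.2.2 _ _ ⟨a, key.symm⟩
  have heq : p.comp (X ^ 2) = a ∧ q.comp (X ^ 2) = a := by
    have hane : a ≠ 0 := hamonic.ne_zero
    rcases hdvd with hd | hd
    · have h1 : p.comp (X ^ 2) = a := by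
        refine Polynomial.eq_of_monic_of_associated hpcm hamonic ?_
        exact (associated_of_dvd_of_natDegree_le hd hpcm.ne_zero
          (by rw [hdega, hdegp])).symm
      refine ⟨h1, ?_⟩
      have := key
      rw [h1] at this
      exact (mul_left_cancel₀ hane this.symm)
    · have h1 : q.comp (X ^ 2) = a := by
        refine Polynomial.eq_of_monic_of_associated hqcm hamonic ?_
        exact (associated_of_dvd_of_natDegree_le hd hqcm.ne_zero
          (by rw [hdega, hdegq])).symm
      refine ⟨?_, h1⟩
      have := key
      rw [h1, mul_comm (p.comp (X ^ 2))] at this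
      exact (mul_left_cancel₀ hane this.symm)
  have hip : Irreducible p := aux_irred (heq.1 ▸ hirr')
  have hiq : Irreducible q := aux_irred (heq.2 ▸ hirr')
  constructor
  · rw [← Matrix.charpoly_map, Matrix.map_mul, hMt, ← hM']
    exact hip
  · rw [← Matrix.charpoly_map, Matrix.map_mul, hMt, ← hM']
    exact hiq
end

section
/- Let M be an m×m real matrix, set n = 2m, and let A = [[0, M],[Mᵀ, 0]] be the n×n symmetric block matrix. Then Δ(A) = 2^n · (det M)² · Δ(MᵀM)². -/
open Matrix Polynomial
open scoped Classical

/-- An enumeration of the complex roots (with multiplicity) of a polynomial that has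
exactly `n` roots, obtained by choice (and junk otherwise). -/
noncomputable def rootsEnum (n : ℕ) (f : Polynomial ℂ) : Fin n → ℂ :=
  if h : ∃ α : Fin n → ℂ, f.roots = Multiset.map α Finset.univ.val then h.choose
  else fun _ => 0

/-- The discriminant `∏_{i<j} (αᵢ - αⱼ)²` of a polynomial with `n` complex roots
`α₁, …, αₙ` listed with multiplicity. -/
noncomputable def polyDisc (n : ℕ) (f : Polynomial ℂ) : ℂ :=
  ∏ i : Fin n, ∏ j ∈ Finset.univ.filter (fun j => i < j),
    (rootsEnum n f i - rootsEnum n f j) ^ 2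

/-!
For a monic polynomial `f` of degree `n` with roots `αᵢ`, pairing the factors `αᵢ - αⱼ` and
`αⱼ - αᵢ` gives `Δ(f) = (-1)^(n choose 2) ∏ᵢ f'(αᵢ)`. The characteristic polynomial of
`A = [[0, M], [Mᵀ, 0]]` is `g(x²)` with `g` that of `MᵀM`, so its roots are `±√μ` for the roots
`μ` of `g`, and since `(g(x²))' = 2x g'(x²)` each such pair contributes `-4 μ g'(μ)²`. Hence
`∏ f'(α) = (-4)^m det(MᵀM) (∏ g'(μ))²`, and the signs cancel because `(2m choose 2) + m = 2m²`.
-/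

lemma Nat.choose_two_two_mul_add_self (m : ℕ) : (2 * m).choose 2 + m = 2 * (m * m) := by
  rcases Nat.eq_zero_or_pos m with rfl | hm
  · rfl
  · have : 2 * m - 1 + 1 = 2 * m := by omega
    rw [Nat.choose_two_right, mul_assoc, Nat.mul_div_cancel_left _ two_pos, ← Nat.mul_succ,
      Nat.succ_eq_add_one, this]
    ring

lemma neg_one_pow_choose_two_two_mul_mul_neg_four_pow {R : Type*} [CommRing R] (m : ℕ) :
    (-1 : R) ^ (2 * m).choose 2 * (-4) ^ m = 2 ^ (2 * m) := by
  rw [show (-4 : R) = -1 * 2 ^ 2 by norm_num, mul_pow, ← mul_assoc, ← pow_add,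
    Nat.choose_two_two_mul_add_self, pow_mul, neg_one_sq, one_pow, one_mul, ← pow_mul, mul_comm]

open Finset in
lemma prod_prod_compl_sub_eq_neg_one_pow_mul {R : Type*} [CommRing R] {n : ℕ} (α : Fin n → R) :
    ∏ i, ∏ j ∈ {i}ᶜ, (α i - α j) =
      (-1) ^ n.choose 2 * ∏ i, ∏ j ∈ univ.filter (fun j => i < j), (α i - α j) ^ 2 := by
  have hcard : ∑ i : Fin n, #(Ioi i) = n.choose 2 := by
    simp only [Fin.card_Ioi]
    rw [Fin.sum_univ_eq_sum_range (fun i => n - 1 - i), sum_range_reflect (fun i => i) n,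
      sum_range_id, Nat.choose_two_right]
  rw [← prod_prod_Ioi_mul_eq_prod_prod_off_diag fun j i => α i - α j, ← hcard,
    ← prod_pow_eq_pow_sum, ← prod_mul_distrib]
  refine prod_congr rfl fun i _ => ?_
  rw [filter_lt_eq_Ioi, ← prod_const, ← prod_mul_distrib]
  exact prod_congr rfl fun j _ => by ring

lemma Multiset.exists_eq_univ_map_fin {α : Type*} (s : Multiset α) :
    ∃ e : Fin (Multiset.card s) → α, s = Finset.univ.val.map e := by
  refine ⟨fun i => s.toList.get (i.cast (Multiset.length_toList s).symm), ?_⟩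
  rw [Fin.univ_val_map]
  conv_lhs => rw [← Multiset.coe_toList s]
  congr 1
  apply List.ext_get <;> simp

lemma prod_prod_compl_sub_eq_prod_roots_derivative {K ι : Type*} [Field K] [Fintype ι]
    [DecidableEq ι] {f : K[X]} (hf : f.Splits) (hm : f.Monic) {α : ι → K}
    (hα : f.roots = Finset.univ.val.map α) :
    ∏ i, ∏ j ∈ {i}ᶜ, (α i - α j) = (f.roots.map fun r => f.derivative.eval r).prod := by
  rw [hα, Multiset.map_map, Finset.prod_eq_multiset_prod]
  congr 1
  refine Multiset.map_congr rfl fun i _ => ?_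
  have hi : α i ∈ f.roots := hα ▸ Multiset.mem_map_of_mem α (Finset.mem_univ_val i)
  rw [Function.comp_apply, hf.eval_root_derivative hm hi, hα,
    ← Multiset.map_erase_of_mem _ _ (Finset.mem_univ_val i), Multiset.map_map,
    Finset.compl_singleton, Finset.prod_eq_multiset_prod, Finset.erase_val]
  rfl

lemma polyDisc_eq_neg_one_pow_mul_prod_roots_derivative {n : ℕ} {f : ℂ[X]} (hm : f.Monic)
    (hn : f.natDegree = n) :
    polyDisc n f = (-1) ^ n.choose 2 * (f.roots.map fun r => f.derivative.eval r).prod := by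
  have hcard : Multiset.card f.roots = n := IsAlgClosed.card_roots_eq_natDegree.trans hn
  have hex : ∃ α : Fin n → ℂ, f.roots = Finset.univ.val.map α :=
    hcard ▸ f.roots.exists_eq_univ_map_fin
  have henum : f.roots = Finset.univ.val.map (rootsEnum n f) := by
    rw [rootsEnum, dif_pos hex]
    exact hex.choose_spec
  rw [← prod_prod_compl_sub_eq_prod_roots_derivative (IsAlgClosed.splits f) hm henum,
    prod_prod_compl_sub_eq_neg_one_pow_mul, polyDisc, ← mul_assoc, ← pow_add, ← two_mul,
    pow_mul, neg_one_sq, one_pow, one_mul]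

lemma Polynomial.roots_comp_X_sq {K : Type*} [Field K] {g : K[X]} (hg : g.Splits)
    (hm : g.Monic) {s : K → K} (hs : ∀ μ ∈ g.roots, s μ ^ 2 = μ) :
    (g.comp (X ^ 2)).roots = g.roots.bind fun μ => {s μ, -s μ} := by
  suffices g.comp (X ^ 2) = ((g.roots.bind fun μ => {s μ, -s μ}).map fun a => X - C a).prod by
    rw [this, roots_multiset_prod_X_sub_C]
  conv_lhs => rw [hg.eq_prod_roots_of_monic hm]
  rw [multiset_prod_comp, Multiset.map_bind, Multiset.prod_bind, Multiset.map_map]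
  refine congrArg _ (Multiset.map_congr rfl fun μ hμ => ?_)
  simp only [Function.comp_apply, sub_comp, X_comp, C_comp, Multiset.insert_eq_cons,
    Multiset.map_cons, Multiset.map_singleton, Multiset.prod_cons, Multiset.prod_singleton,
    map_neg]
  rw [show C μ = C (s μ) ^ 2 by rw [← C_pow, hs μ hμ]]
  ring

lemma Polynomial.prod_roots_derivative_comp_X_sq {K : Type*} [Field K] [IsAlgClosed K]
    {g : K[X]} (hm : g.Monic) :
    ((g.comp (X ^ 2)).roots.map fun r => (g.comp (X ^ 2)).derivative.eval r).prod =
      (-4) ^ g.natDegree * g.roots.prod * (g.roots.map fun r => g.derivative.eval r).prod ^ 2 := by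
  choose s hs using fun μ : K => IsAlgClosed.exists_pow_nat_eq μ two_pos
  have hpair (μ : K) : (({s μ, -s μ} : Multiset K).map
      fun r => (g.comp (X ^ 2)).derivative.eval r).prod = -4 * μ * g.derivative.eval μ ^ 2 := by
    simp only [Multiset.insert_eq_cons, Multiset.map_cons, Multiset.map_singleton,
      Multiset.prod_cons, Multiset.prod_singleton, derivative_comp, eval_mul, eval_comp,
      derivative_X_pow, eval_C, eval_X, eval_pow, even_two, Even.neg_pow, hs μ]
    linear_combination (-4 * g.derivative.eval μ ^ 2) * hs μ
  rw [roots_comp_X_sq (IsAlgClosed.splits g) hm fun μ _ => hs μ, Multiset.map_bind,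
    Multiset.prod_bind, Multiset.map_congr rfl fun μ _ => hpair μ, Multiset.prod_map_mul,
    Multiset.prod_map_mul, Multiset.prod_map_pow, Multiset.map_const', Multiset.prod_replicate,
    Multiset.map_id', IsAlgClosed.card_roots_eq_natDegree]

lemma Matrix.charpoly_fromBlocks_zero₁₁_zero₂₂ {n R : Type*} [Fintype n] [DecidableEq n]
    [CommRing R] (A B : Matrix n n R) :
    (fromBlocks 0 A B 0).charpoly = (B * A).charpoly.comp (X ^ 2) := by
  -- right multiplication by `U` clears the upper right block of `x - [[0, A], [B, 0]]`
  set U : Matrix (n ⊕ n) (n ⊕ n) R[X] := fromBlocks (scalar n X) (A.map C) 0 (scalar n X)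
  have hU : U.det = X ^ (2 * Fintype.card n) := by
    simp [U, det_fromBlocks_zero₂₁, two_mul, pow_add]
  have hprod : charmatrix (fromBlocks 0 A B 0) * U =
      fromBlocks (scalar n ((X : R[X]) ^ 2)) 0 (-(B.map C * scalar n X))
        (scalar n (X ^ 2) - (B * A).map C) := by
    rw [charmatrix_fromBlocks, charmatrix_zero, fromBlocks_multiply]
    congr 1
    · simp [sq]
    · rw [(scalar_commute _ (Commute.all _) _).eq, neg_mul, add_neg_cancel]
    · rw [mul_zero, add_zero, neg_mul]
    · simp [sq]
      abel
  have hcomp : (B * A).charpoly.comp (X ^ 2) = (scalar n (X ^ 2) - (B * A).map C).det := by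
    rw [charpoly, ← coe_compRingHom_apply, RingHom.map_det]
    refine congrArg det (Matrix.ext fun i j => ?_)
    by_cases h : i = j <;> simp [h, -Matrix.map_mul]
  refine (isRegular_X_pow (2 * Fintype.card n)).right ?_
  have hdet := congrArg det hprod
  rw [det_mul, hU, det_fromBlocks_zero₁₂, ← hcomp] at hdet
  simpa [← pow_mul, charpoly, mul_comm _ (X ^ _)] using hdet

theorem stmt14 {m : ℕ} (M : Matrix (Fin m) (Fin m) ℝ) :
    polyDisc (2 * m)
        (((Matrix.fromBlocks 0 M Mᵀ 0).map (Complex.ofReal : ℝ → ℂ)).charpoly)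
      = 2 ^ (2 * m) * ((M.det : ℝ) : ℂ) ^ 2
        * (polyDisc m (((Mᵀ * M).map (Complex.ofReal : ℝ → ℂ)).charpoly)) ^ 2 := by
  set N := M.map (Complex.ofReal : ℝ → ℂ)
  set g := (Nᵀ * N).charpoly
  have hblocks : (fromBlocks 0 M Mᵀ 0).map Complex.ofReal = fromBlocks 0 N Nᵀ 0 := by
    simp [N, fromBlocks_map, transpose_map]
  have hgram : (Mᵀ * M).map Complex.ofReal = Nᵀ * N := by
    rw [← transpose_map]
    exact Matrix.map_mul (f := Complex.ofRealHom)
  have hdet : (M.det : ℂ) ^ 2 = g.roots.prod := by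
    rw [← det_eq_prod_roots_charpoly, det_mul, det_transpose, ← sq]
    exact congrArg (· ^ 2) (Complex.ofRealHom.map_det M)
  have hdeg : g.natDegree = m := by
    rw [charpoly_natDegree_eq_dim, Fintype.card_fin]
  have hdeg₂ : (fromBlocks 0 N Nᵀ 0).charpoly.natDegree = 2 * m := by
    rw [charpoly_natDegree_eq_dim, Fintype.card_sum, Fintype.card_fin, two_mul]
  have hsign : ((-1 : ℂ) ^ m.choose 2) ^ 2 = 1 := by
    rw [← pow_mul, mul_comm, pow_mul, neg_one_sq, one_pow]
  rw [hblocks, hgram,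
    polyDisc_eq_neg_one_pow_mul_prod_roots_derivative (charpoly_monic _) hdeg₂,
    polyDisc_eq_neg_one_pow_mul_prod_roots_derivative (charpoly_monic _) hdeg,
    charpoly_fromBlocks_zero₁₁_zero₂₂, prod_roots_derivative_comp_X_sq (charpoly_monic _), hdeg,
    hdet]
  linear_combination (g.roots.prod * (g.roots.map fun r => g.derivative.eval r).prod ^ 2) *
    (neg_one_pow_choose_two_two_mul_mul_neg_four_pow (R := ℂ) m - 2 ^ (2 * m) * hsign)
end

section
/- Let T be a tree on n = 2m vertices whose vertices are ordered so that its adjacency matrix has the block form A = [[0, M],[Mᵀ, 0]] with M an m×m 0-1 matrix, and suppose the characteristic polynomial of A is irreducible over ℚ. Then Δ(T) = 2^n · Δ(MᵀM)². -/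
open Matrix Polynomial
open scoped Classical

/-!
The adjacency matrix `A = [[0, M], [Mᵀ, 0]]` has characteristic polynomial `q(x²)`, where `q` is
the characteristic polynomial of `MᵀM`. The roots of `q(x²)` are `±w` with `w² = a` for the roots
`a` of `q`, and `(q(x²))'(±w) = ±2w q'(a)`; writing both discriminants as `±∏ f'(α)` gives
`Δ(q(x²)) = (-4)^m q(0) Δ(q)² = 4^m det(MᵀM) Δ(q)²`.

Since the bipartite graph of `M` is a forest, every `S × S'` submatrix of `M` has fewer than
`|S| + |S'|` ones. Hence some row has at most one `1`, and expanding along it shows by induction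
that `det M ∈ {0, ±1}`. Irreducibility of the characteristic polynomial rules out `det M = 0`
(it would make `x` a factor), so `det(MᵀM) = 1`.
-/

theorem roots_eq_map_rootsEnum {n : ℕ} {f : ℂ[X]} (hf : Multiset.card f.roots = n) :
    f.roots = Multiset.map (rootsEnum n f) Finset.univ.val := by
  have hex : ∃ α : Fin n → ℂ, f.roots = Multiset.map α Finset.univ.val := by
    obtain ⟨l, hl⟩ : ∃ l : List ℂ, f.roots = l := ⟨_, (Multiset.coe_toList _).symm⟩
    obtain rfl : l.length = n := by simpa [hl] using hf
    exact ⟨l.get, by simp [hl]⟩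
  rw [rootsEnum, dif_pos hex]
  exact hex.choose_spec

theorem Fin.sum_card_filter_lt (n : ℕ) :
    ∑ i : Fin n, (Finset.univ.filter (fun j => i < j)).card = n.choose 2 := by
  simp only [Finset.filter_lt_eq_Ioi, Fin.card_Ioi]
  have hreflect := Finset.sum_range_reflect (fun i => i) n
  rw [Fin.sum_univ_eq_sum_range (fun i => n - 1 - i), hreflect, Finset.sum_range_id,
    Nat.choose_two_right]

theorem Fin.prod_filter_lt_sq_sub {R : Type*} [CommRing R] {n : ℕ} (β : Fin n → R) :
    ∏ i : Fin n, ∏ j ∈ Finset.univ.filter (fun j => i < j), (β i - β j) ^ 2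
      = (-1) ^ n.choose 2 * ∏ i : Fin n, ∏ j ∈ Finset.univ.erase i, (β i - β j) := by
  have hsplit : ∀ i : Fin n, ∏ j ∈ Finset.univ.erase i, (β i - β j)
      = (∏ j ∈ Finset.univ.filter (fun j => i < j), (β i - β j))
        * ∏ j ∈ Finset.univ.filter (fun j => j < i), (β i - β j) := by
    intro i
    rw [← Finset.prod_filter_mul_prod_filter_not (Finset.univ.erase i) (fun j => i < j)]
    congr 1 <;> apply Finset.prod_congr _ (fun _ _ => rfl) <;> ext j <;> simp <;> omega
  have hswap : ∏ i : Fin n, ∏ j ∈ Finset.univ.filter (fun j => j < i), (β i - β j)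
      = ∏ i : Fin n, ∏ j ∈ Finset.univ.filter (fun j => i < j), (β j - β i) :=
    Finset.prod_comm' (fun _ _ => by simp)
  have hsign : ∏ i : Fin n, ∏ _j ∈ Finset.univ.filter (fun j => i < j), (-1 : R)
      = (-1) ^ n.choose 2 := by
    simp only [Finset.prod_const, Finset.prod_pow_eq_pow_sum, Fin.sum_card_filter_lt]
  simp_rw [hsplit, Finset.prod_mul_distrib, hswap, ← hsign, ← Finset.prod_mul_distrib]
  refine Finset.prod_congr rfl fun i _ => Finset.prod_congr rfl fun j _ => by ring

theorem polyDisc_eq_sign_mul_prod_eval_derivative {n : ℕ} {f : ℂ[X]} (hf : f.Monic)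
    (hcard : Multiset.card f.roots = n) :
    polyDisc n f = (-1) ^ n.choose 2 * (f.roots.map fun r => f.derivative.eval r).prod := by
  set β := rootsEnum n f
  have hβ : f.roots = Multiset.map β Finset.univ.val := roots_eq_map_rootsEnum hcard
  have hderiv : ∀ i, f.derivative.eval (β i) = ∏ j ∈ Finset.univ.erase i, (β i - β j) := by
    intro i
    rw [(IsAlgClosed.splits f).eval_root_derivative hf (by simp [hβ]), hβ,
      ← Multiset.map_erase_of_mem _ _ (Finset.mem_univ i), Multiset.map_map]
    rfl
  rw [polyDisc, Fin.prod_filter_lt_sq_sub, hβ, Multiset.map_map]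
  congr 1
  exact Finset.prod_congr rfl fun i _ => (hderiv i).symm

theorem roots_comp_X_sq {q : ℂ[X]} (hq : q.Monic) {w : ℂ → ℂ} (hw : ∀ a, w a ^ 2 = a) :
    (q.comp (X ^ 2)).roots = q.roots.map w + q.roots.map (fun a => -w a) := by
  have hfactor : ∀ a, (X - C a).comp (X ^ 2) = (X - C (w a)) * (X - C (-w a)) := by
    intro a
    rw [sub_comp, X_comp, C_comp, map_neg]
    nth_rw 1 [← hw a]
    rw [C_pow]
    ring
  have hprod : q.comp (X ^ 2)
      = ((q.roots.map w + q.roots.map (fun a => -w a)).map (fun a => X - C a)).prod := by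
    conv_lhs => rw [(IsAlgClosed.splits q).eq_prod_roots_of_monic hq]
    rw [multiset_prod_comp, Multiset.map_add, Multiset.prod_add, Multiset.map_map,
      Multiset.map_map, Multiset.map_map, ← Multiset.prod_map_mul]
    exact congrArg _ (Multiset.map_congr rfl fun a _ => hfactor a)
  rw [hprod, roots_multiset_prod_X_sub_C]

theorem neg_one_pow_two_mul_choose_two {R : Type*} [Monoid R] [HasDistribNeg R] (m : ℕ) :
    (-1 : R) ^ (2 * m).choose 2 = (-1) ^ m := by
  have h : (2 * m).choose 2 = m + 2 * (m * (m - 1)) := by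
    rw [Nat.choose_two_right]
    refine Nat.div_eq_of_eq_mul_left two_pos ?_
    rcases m with _ | m
    · rfl
    · rw [show 2 * (m + 1) - 1 = 2 * m + 1 by omega, Nat.add_sub_cancel]
      ring
  rw [h, pow_add, pow_mul, neg_one_sq, one_pow, mul_one]

theorem polyDisc_comp_X_sq {m : ℕ} {q : ℂ[X]} (hq : q.Monic) (hdeg : q.natDegree = m) :
    polyDisc (2 * m) (q.comp (X ^ 2)) = (-4) ^ m * q.coeff 0 * polyDisc m q ^ 2 := by
  choose w hw using fun a : ℂ => IsAlgClosed.exists_pow_nat_eq a two_pos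
  have hcard : Multiset.card q.roots = m := by
    rw [← hdeg, ← splits_iff_card_roots.mp (IsAlgClosed.splits q)]
  have hroots := roots_comp_X_sq hq hw
  have hderiv : ∀ z, (q.comp (X ^ 2)).derivative.eval z = 2 * z * q.derivative.eval (z ^ 2) := by
    intro z
    rw [derivative_comp, eval_mul, eval_comp, derivative_X_pow]
    simp only [eval_C, eval_mul, eval_pow, eval_X]
    ring
  have hpair : ∀ a, (q.comp (X ^ 2)).derivative.eval (w a) * (q.comp (X ^ 2)).derivative.eval (-w a)
      = -4 * (a * q.derivative.eval a ^ 2) := by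
    intro a
    rw [hderiv, hderiv, neg_sq, hw]
    linear_combination (-4 * q.derivative.eval a ^ 2) * hw a
  have hprod_roots : q.roots.prod = (-1) ^ m * q.coeff 0 := by
    rw [(IsAlgClosed.splits q).coeff_zero_eq_prod_roots_of_monic hq, hdeg, ← mul_assoc,
      ← pow_add, ← two_mul, pow_mul, neg_one_sq, one_pow, one_mul]
  rw [polyDisc_eq_sign_mul_prod_eval_derivative (hq.comp (monic_X_pow 2) (by simp))
      (by rw [hroots, Multiset.card_add, Multiset.card_map, Multiset.card_map, hcard, two_mul]),
    polyDisc_eq_sign_mul_prod_eval_derivative hq hcard, hroots, Multiset.map_add,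
    Multiset.prod_add, Multiset.map_map, Multiset.map_map, ← Multiset.prod_map_mul]
  simp only [Function.comp_def, hpair, Multiset.prod_map_mul, Multiset.map_const',
    Multiset.prod_replicate, Multiset.map_id', Multiset.prod_map_pow,
    neg_one_pow_two_mul_choose_two]
  rw [hcard, hprod_roots, mul_pow, ← pow_mul, pow_mul', neg_one_sq, one_pow, one_mul]
  have hsign : (-1 : ℂ) ^ m * (-1) ^ m = 1 := by rw [← mul_pow, neg_one_mul, neg_neg, one_pow]
  linear_combination ((-4) ^ m * q.coeff 0 * (q.roots.map fun r => q.derivative.eval r).prod ^ 2)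
    * hsign

namespace Matrix

section BlockCharpoly

variable {R : Type*} [CommRing R] {n : Type*} [Fintype n] [DecidableEq n]

theorem charpoly_fromBlocks_zero₁₁_zero₂₂_s15 (B C' : Matrix n n R) :
    (fromBlocks 0 B C' 0).charpoly = (C' * B).charpoly.comp (X ^ 2) := by
  have hcomp : (C' * B).charpoly.comp (X ^ 2)
      = (scalar n ((X : R[X]) ^ 2) - (C' * B).map Polynomial.C).det := by
    rw [charpoly, ← coe_compRingHom_apply, RingHom.map_det]
    congr 1
    ext i j : 1
    by_cases h : i = j <;> simp [h, mul_apply]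
  -- right multiplication by `[[1, B], [0, X]]` makes the characteristic matrix block triangular
  have hprod : charmatrix (fromBlocks 0 B C' 0)
        * fromBlocks 1 (B.map Polynomial.C) 0 (scalar n X)
      = fromBlocks (scalar n X) 0 (-C'.map Polynomial.C)
          (scalar n (X ^ 2) - (C' * B).map Polynomial.C) := by
    simp [charmatrix_fromBlocks, fromBlocks_multiply, sq, sub_eq_add_neg, add_comm,
      ← smul_eq_diagonal_mul, ← smul_eq_mul_diagonal, ← diagonal_smul]
  rw [hcomp, charpoly, ← (isRegular_X_pow (Fintype.card n)).right.eq_iff]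
  have hdet := congrArg det hprod
  rw [det_mul, det_fromBlocks_zero₂₁, det_fromBlocks_zero₁₂] at hdet
  simpa [mul_comm] using hdet

theorem det_fromBlocks_zero₁₁_zero₂₂ (B C' : Matrix n n R) :
    (fromBlocks 0 B C' 0).det = (-1) ^ Fintype.card n * (C' * B).det := by
  rw [det_eq_sign_charpoly_coeff, det_eq_sign_charpoly_coeff (C' * B),
    charpoly_fromBlocks_zero₁₁_zero₂₂_s15, coeff_zero_eq_eval_zero, coeff_zero_eq_eval_zero, eval_comp,
    Fintype.card_sum, pow_add, ← mul_assoc, ← mul_pow, neg_one_mul, neg_neg, one_pow, one_mul]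
  simp

end BlockCharpoly

theorem det_ne_zero_of_irreducible_charpoly {K : Type*} [Field K] {n : Type*} [Fintype n]
    [DecidableEq n] {A : Matrix n n K} (hA : Irreducible A.charpoly)
    (hn : Fintype.card n ≠ 1) : A.det ≠ 0 := by
  intro hdet
  have hX : X ∣ A.charpoly := by
    rw [X_dvd_iff]
    simpa [hdet] using det_eq_sign_charpoly_coeff A
  have hassoc : Associated X A.charpoly :=
    associated_of_dvd_dvd hX (irreducible_X.dvd_symm hA hX)
  apply hn
  rw [← charpoly_natDegree_eq_dim A,
    ← natDegree_eq_of_degree_eq (degree_eq_degree_of_associated hassoc), natDegree_X]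

end Matrix

theorem polyDisc_charpoly_fromBlocks {m : ℕ} (B C' : Matrix (Fin m) (Fin m) ℂ) :
    polyDisc (2 * m) (fromBlocks 0 B C' 0).charpoly
      = 4 ^ m * (C' * B).det * polyDisc m (C' * B).charpoly ^ 2 := by
  rw [charpoly_fromBlocks_zero₁₁_zero₂₂_s15,
    polyDisc_comp_X_sq (charpoly_monic _) (by rw [charpoly_natDegree_eq_dim, Fintype.card_fin]),
    det_eq_sign_charpoly_coeff, Fintype.card_fin, ← mul_assoc, ← mul_pow]
  norm_num

theorem SimpleGraph.IsAcyclic.card_edgeFinset_lt {V : Type*} [Fintype V] [Nonempty V]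
    {G : SimpleGraph V} [Fintype G.edgeSet] (hG : G.IsAcyclic) :
    G.edgeFinset.card < Fintype.card V := by
  -- extend `G` to a spanning tree of the complete graph
  obtain ⟨F, hGF, -, hF⟩ :=
    SimpleGraph.connected_top.exists_isTree_le_of_le_of_isAcyclic le_top hG
  rw [← hF.card_edgeFinset]
  exact Nat.lt_succ_of_le (Finset.card_le_card (SimpleGraph.edgeFinset_mono hGF))

namespace Matrix

variable {α β : Type*}

def bipartiteGraph {R : Type*} [Zero R] (M : Matrix α β R) : SimpleGraph (α ⊕ β) :=
  SimpleGraph.fromRel fun i j => fromBlocks 0 M Mᵀ 0 i j ≠ 0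

theorem bipartiteGraph_adj_inl_inr {R : Type*} [Zero R] (M : Matrix α β R) (i : α) (j : β) :
    M.bipartiteGraph.Adj (Sum.inl i) (Sum.inr j) ↔ M i j ≠ 0 := by
  simp [bipartiteGraph]

/-- For a `0`-`1` matrix: every induced subgraph of its bipartite graph that meets both sides has
fewer edges than vertices, as in a forest. -/
def SumLtCardOnRectangles (A : Matrix α β ℤ) : Prop :=
  ∀ (S : Finset α) (T : Finset β), S.Nonempty → T.Nonempty →
    ∑ i ∈ S, ∑ j ∈ T, A i j < S.card + T.card

theorem sumLtCardOnRectangles_of_isAcyclic {M : Matrix α β ℤ}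
    (hM : ∀ i j, M i j = 0 ∨ M i j = 1) (hacyc : M.bipartiteGraph.IsAcyclic) :
    M.SumLtCardOnRectangles := by
  intro S T ⟨i₀, hi₀⟩ _
  let H := M.bipartiteGraph.comap
    (Function.Embedding.sumMap (Function.Embedding.subtype (· ∈ S))
      (Function.Embedding.subtype (· ∈ T)))
  have : Nonempty (S ⊕ T) := ⟨Sum.inl ⟨i₀, hi₀⟩⟩
  have hH : H.edgeFinset.card < Fintype.card (S ⊕ T) := (hacyc.of_comap _).card_edgeFinset_lt
  let E := (Finset.univ : Finset (S × T)).filter fun p => M p.1 p.2 = 1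
  have hsum : ∑ i ∈ S, ∑ j ∈ T, M i j = E.card := by
    rw [Finset.card_filter, Nat.cast_sum, Fintype.sum_prod_type, ← Finset.sum_coe_sort S]
    refine Finset.sum_congr rfl fun i _ => ?_
    rw [← Finset.sum_coe_sort T]
    refine Finset.sum_congr rfl fun j _ => ?_
    rcases hM i j with h | h <;> simp [h]
  have hE : E.card ≤ H.edgeFinset.card := by
    refine Finset.card_le_card_of_injOn (fun p => s(Sum.inl p.1, Sum.inr p.2)) ?_ ?_
    · intro p hp
      rw [Finset.mem_coe, Finset.mem_filter] at hp
      rw [Finset.mem_coe, SimpleGraph.mem_edgeFinset, SimpleGraph.mem_edgeSet,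
        SimpleGraph.comap_adj]
      exact (bipartiteGraph_adj_inl_inr M _ _).mpr (by simp [hp.2])
    · intro p _ q _ hpq
      simpa [Prod.ext_iff] using hpq
  simp only [Fintype.card_sum, Fintype.card_coe] at hH
  omega

theorem SumLtCardOnRectangles.submatrix {α' β' : Type*} {A : Matrix α β ℤ}
    (hA : A.SumLtCardOnRectangles) {f : α' → α} {g : β' → β} (hf : Function.Injective f)
    (hg : Function.Injective g) : (A.submatrix f g).SumLtCardOnRectangles := by
  intro S T hS hT
  simpa [Finset.sum_map] using hA (S.map ⟨f, hf⟩) (T.map ⟨g, hg⟩) hS.map hT.map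

theorem SumLtCardOnRectangles.exists_row_sum_lt_two {k : ℕ}
    {A : Matrix (Fin (k + 1)) (Fin (k + 1)) ℤ} (hA : A.SumLtCardOnRectangles) :
    ∃ i, ∑ j, A i j < 2 := by
  have htotal : ∑ i, ∑ j, A i j < ∑ _i : Fin (k + 1), 2 := by
    simpa [mul_two] using hA Finset.univ Finset.univ Finset.univ_nonempty Finset.univ_nonempty
  obtain ⟨i, -, hi⟩ := Finset.exists_lt_of_sum_lt htotal
  exact ⟨i, hi⟩

theorem det_eq_zero_or_isUnit_of_sumLtCardOnRectangles :
    ∀ {k : ℕ} {A : Matrix (Fin k) (Fin k) ℤ}, (∀ i j, A i j = 0 ∨ A i j = 1) →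
      A.SumLtCardOnRectangles → A.det = 0 ∨ IsUnit A.det
  | 0, A, _, _ => by simp
  | k + 1, A, h01, hA => by
    obtain ⟨i, hi⟩ := hA.exists_row_sum_lt_two
    by_cases hzero : ∀ j, A i j = 0
    · exact Or.inl (det_eq_zero_of_row_eq_zero i hzero)
    push Not at hzero
    obtain ⟨j, hj⟩ := hzero
    replace hj : A i j = 1 := (h01 i j).resolve_left hj
    have hrest : ∀ j', j' ≠ j → A i j' = 0 := by
      intro j' hj'
      refine (h01 i j').resolve_right fun h => ?_
      have := Finset.sum_le_sum_of_subset_of_nonneg (Finset.subset_univ {j, j'})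
        (fun x _ _ => (h01 i x).elim (·.ge) (fun h => h ▸ zero_le_one))
      rw [Finset.sum_pair hj'.symm, hj, h] at this
      omega
    rw [det_succ_row A i, Finset.sum_eq_single j (fun j' _ h => by rw [hrest j' h]; ring)
      (by simp), hj, mul_one]
    rcases det_eq_zero_or_isUnit_of_sumLtCardOnRectangles
        (A := A.submatrix i.succAbove j.succAbove) (fun _ _ => h01 _ _)
        (hA.submatrix Fin.succAbove_right_injective Fin.succAbove_right_injective) with h | h
    · exact Or.inl (by rw [h, mul_zero])
    · exact Or.inr ((isUnit_neg_one.pow _).mul h)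

end Matrix

theorem stmt15 {m : ℕ} (M : Matrix (Fin m) (Fin m) ℤ)
    (hM : ∀ i j, M i j = 0 ∨ M i j = 1)
    (htree : (SimpleGraph.fromRel
      (fun i j : Fin m ⊕ Fin m => Matrix.fromBlocks 0 M Mᵀ 0 i j ≠ 0)).IsTree)
    (hirr : Irreducible
      ((Matrix.fromBlocks 0 M Mᵀ 0).charpoly.map (Int.castRingHom ℚ))) :
    polyDisc (2 * m) (((Matrix.fromBlocks 0 M Mᵀ 0).map ((↑) : ℤ → ℂ)).charpoly)
      = 2 ^ (2 * m)
        * (polyDisc m (((Mᵀ * M).map ((↑) : ℤ → ℂ)).charpoly)) ^ 2 := by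
  have hA : ((fromBlocks 0 M Mᵀ 0).map (Int.castRingHom ℚ)).det ≠ 0 :=
    det_ne_zero_of_irreducible_charpoly (by rwa [charpoly_map]) (by simp; omega)
  have hM0 : M.det ≠ 0 := fun h0 => hA <| by
    rw [← RingHom.mapMatrix_apply, ← RingHom.map_det, det_fromBlocks_zero₁₁_zero₂₂, det_mul, h0,
      mul_zero, mul_zero, map_zero]
  have hunit : IsUnit M.det := (det_eq_zero_or_isUnit_of_sumLtCardOnRectangles hM
    (sumLtCardOnRectangles_of_isAcyclic hM htree.isAcyclic)).resolve_left hM0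
  have hdet : ((Mᵀ * M).map ((↑) : ℤ → ℂ)).det = 1 := by
    have h := (RingHom.map_det (Int.castRingHom ℂ) (Mᵀ * M)).symm
    rwa [det_mul, det_transpose, ← sq, Int.isUnit_sq hunit, map_one] at h
  have hcast : (Mᵀ * M).map ((↑) : ℤ → ℂ) = (M.map ((↑) : ℤ → ℂ))ᵀ * M.map ((↑) : ℤ → ℂ) := by
    rw [← transpose_map]
    exact Matrix.map_mul (f := Int.castRingHom ℂ)
  have hblocks : (fromBlocks 0 M Mᵀ 0).map ((↑) : ℤ → ℂ)
      = fromBlocks 0 (M.map ((↑) : ℤ → ℂ)) (M.map ((↑) : ℤ → ℂ))ᵀ 0 := by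
    simp [fromBlocks_map, transpose_map]
  rw [hblocks, polyDisc_charpoly_fromBlocks, ← hcast, hdet, pow_mul]
  norm_num
end

section
/- Let A be the adjacency matrix of a signed graph on n ≥ 2 vertices whose underlying graph is a tree and whose characteristic polynomial is irreducible over ℚ. If B is the adjacency matrix of a signed graph on n vertices with det(xI−B)=det(xI−A) and det(xI−(J−I−B))=det(xI−(J−I−A)), then the underlying graph of B is a tree. -/
/-!
Irreducibility of the characteristic polynomial makes the underlying graph of `B` connected: a
vertex set closed under adjacency splits the matrix into two diagonal blocks, and with them the
characteristic polynomial. For a signed adjacency matrix `tr (M²)` is twice the number of edges,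
while for a symmetric matrix `tr (M²) = ∑ λ²` depends only on the spectrum. Hence `B` has as many
edges as the tree of `A`, namely `n - 1`, and a connected graph on `n` vertices with `n - 1` edges
is a tree.
-/

open Matrix Polynomial

/-- The adjacency matrix of a signed graph: a symmetric integer matrix with zero
diagonal and all entries in `{-1, 0, 1}`. -/
def IsSignedAdjMatrix {n : ℕ} (A : Matrix (Fin n) (Fin n) ℤ) : Prop :=
  A.IsSymm ∧ (∀ i, A i i = 0) ∧ ∀ i j, A i j = -1 ∨ A i j = 0 ∨ A i j = 1

namespace Matrix

variable {n : Type*} [Fintype n] [DecidableEq n]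

theorem charpoly_eq_mul_of_forall_eq_zero {R : Type*} [CommRing R] (M : Matrix n n R)
    (p : n → Prop) [DecidablePred p] (h : ∀ i, p i → ∀ j, ¬p j → M i j = 0) :
    M.charpoly = (M.toSquareBlockProp p).charpoly * (M.toSquareBlockProp (¬p ·)).charpoly := by
  have hblock : ∀ (q : n → Prop) [DecidablePred q], (M.toSquareBlockProp q).charmatrix =
      M.charmatrix.toSquareBlockProp q := fun q _ => by
    ext i j : 1
    simp [charmatrix_apply, toSquareBlockProp_def, diagonal_apply, Subtype.ext_iff]
  rw [charpoly, twoBlockTriangular_det' _ p, charpoly, charpoly, hblock, hblock]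
  intro i hi j hj
  exact (charmatrix_apply_ne M i j fun hij => hj (hij ▸ hi)).trans (by simp [h i hi j hj])

theorem forall_or_forall_not_of_irreducible_charpoly {R : Type*} [CommRing R] [IsDomain R]
    {M : Matrix n n R} (hirr : Irreducible M.charpoly) (p : n → Prop)
    (h : ∀ i, p i → ∀ j, ¬p j → M i j = 0) : (∀ i, ¬p i) ∨ ∀ i, p i := by
  classical
  have hempty : ∀ (q : n → Prop) [DecidablePred q], IsUnit (M.toSquareBlockProp q).charpoly →
      ∀ i, ¬q i := fun q _ hq i hi => by
    have := natDegree_eq_zero_of_isUnit hq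
    rw [charpoly_natDegree_eq_dim, Fintype.card_eq_zero_iff] at this
    exact this.false ⟨i, hi⟩
  rcases hirr.isUnit_or_isUnit (M.charpoly_eq_mul_of_forall_eq_zero p h) with hu | hu
  · exact .inl (hempty p hu)
  · exact .inr fun i => not_not.mp (hempty (¬p ·) hu i)

theorem connected_fromRel_ne_zero_of_irreducible_charpoly_map {R K : Type*} [CommRing R]
    [CommRing K] [IsDomain K] (f : R →+* K) {M : Matrix n n R}
    (hirr : Irreducible (M.charpoly.map f)) :
    (SimpleGraph.fromRel fun i j => M i j ≠ 0).Connected := by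
  rw [← charpoly_map] at hirr
  have : Nonempty n := not_isEmpty_iff.mp fun _ =>
    hirr.not_isUnit (by rw [charpoly_isEmpty]; exact isUnit_one)
  set G := SimpleGraph.fromRel fun i j => M i j ≠ 0
  refine (SimpleGraph.connected_iff G).mpr ⟨fun u v => ?_, this⟩
  have hclosed : ∀ i, G.Reachable u i → ∀ j, ¬G.Reachable u j → M.map f i j = 0 := by
    intro i hi j hj
    by_contra hij
    have hadj : G.Adj i j :=
      (SimpleGraph.fromRel_adj _ i j).mpr ⟨fun h => hj (h ▸ hi), .inl fun h => hij (by simp [h])⟩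
    exact hj (hi.trans hadj.reachable)
  exact ((forall_or_forall_not_of_irreducible_charpoly hirr _ hclosed).resolve_left
    fun h => h u .rfl) v

theorem IsHermitian.trace_mul_self {𝕜 : Type*} [RCLike 𝕜] {A : Matrix n n 𝕜}
    (hA : A.IsHermitian) : (A * A).trace = (A.charpoly.roots.map (· ^ 2)).sum := by
  have hsq : A * A = cfc (· ^ 2 : ℝ → ℝ) A := by
    rw [← sq]; exact (cfc_pow_id (R := ℝ) A 2 hA).symm
  have hchar := hA.charpoly_cfc_eq (· ^ 2)
  rw [hsq, trace_eq_sum_roots_charpoly_of_splits, hchar, roots_prod,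
    hA.roots_charpoly_eq_eigenvalues]
  · simp only [roots_X_sub_C]
    simp
  · exact Finset.prod_ne_zero_iff.mpr fun i _ => X_sub_C_ne_zero _
  · rw [← hsq, ← sq]; exact (hA.pow 2).splits_charpoly

theorem IsSymm.trace_mul_self_eq_of_charpoly_eq {A B : Matrix n n ℤ} (hA : A.IsSymm)
    (hB : B.IsSymm) (h : A.charpoly = B.charpoly) : (A * A).trace = (B * B).trace := by
  have hreal : ∀ M : Matrix n n ℤ, M.IsSymm →
      ((M * M).trace : ℝ) = ((M.charpoly.map (Int.castRingHom ℝ)).roots.map (· ^ 2)).sum := by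
    intro M hM
    have hherm : (M.map (Int.castRingHom ℝ)).IsHermitian := isHermitian_iff_isSymm.mpr (hM.map _)
    rw [← charpoly_map, ← hherm.trace_mul_self, ← Matrix.map_mul]
    exact AddMonoidHom.map_trace (Int.castRingHom ℝ) (M * M)
  exact_mod_cast (hreal A hA).trans (h ▸ hreal B hB).symm

end Matrix

theorem IsSignedAdjMatrix.trace_mul_self {n : ℕ} {M : Matrix (Fin n) (Fin n) ℤ}
    (hM : IsSignedAdjMatrix M) :
    (M * M).trace = 2 * Nat.card (SimpleGraph.fromRel fun i j => M i j ≠ 0).edgeSet := by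
  classical
  obtain ⟨hsymm, hdiag, hval⟩ := hM
  set G := SimpleGraph.fromRel fun i j => M i j ≠ 0
  have hadj : ∀ i j, G.Adj i j ↔ M i j ≠ 0 := fun i j => by
    rw [SimpleGraph.fromRel_adj, ← hsymm.apply i j, or_self]
    exact ⟨And.right, fun h => ⟨fun hij => h (hij ▸ hdiag i), h⟩⟩
  have hentry : ∀ i j, M i j * M j i = if G.Adj i j then 1 else 0 := fun i j => by
    rw [hsymm.apply i j]
    simp only [hadj]
    rcases hval i j with h | h | h <;> simp [h]
  calc (M * M).trace = ∑ p : Fin n × Fin n, if G.Adj p.1 p.2 then 1 else 0 := by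
        simp only [trace, diag, mul_apply, hentry, Fintype.sum_prod_type]
    _ = 2 * Nat.card G.edgeSet := by
        rw [Finset.sum_boole, Nat.card_eq_fintype_card, ← SimpleGraph.edgeFinset_card]
        exact_mod_cast (G.two_mul_card_edgeFinset).symm

theorem stmt17_general {n : ℕ}
    (A : Matrix (Fin n) (Fin n) ℤ) (hA : IsSignedAdjMatrix A)
    (hAtree : (SimpleGraph.fromRel (fun i j : Fin n => A i j ≠ 0)).IsTree)
    (hirr : Irreducible (A.charpoly.map (Int.castRingHom ℚ)))
    (B : Matrix (Fin n) (Fin n) ℤ) (hB : IsSignedAdjMatrix B)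
    (h1 : B.charpoly = A.charpoly) :
    (SimpleGraph.fromRel (fun i j : Fin n => B i j ≠ 0)).IsTree := by
  have hconn : (SimpleGraph.fromRel fun i j : Fin n => B i j ≠ 0).Connected :=
    connected_fromRel_ne_zero_of_irreducible_charpoly_map _ (h1 ▸ hirr)
  have hedges : Nat.card (SimpleGraph.fromRel fun i j : Fin n => B i j ≠ 0).edgeSet
      = Nat.card (SimpleGraph.fromRel fun i j : Fin n => A i j ≠ 0).edgeSet := by
    have := hB.1.trace_mul_self_eq_of_charpoly_eq hA.1 h1
    rw [hA.trace_mul_self, hB.trace_mul_self] at this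
    omega
  rw [SimpleGraph.isTree_iff_connected_and_card] at hAtree ⊢
  exact ⟨hconn, hedges ▸ hAtree.2⟩

theorem stmt17 {n : ℕ} (hn : 2 ≤ n)
    (A : Matrix (Fin n) (Fin n) ℤ) (hA : IsSignedAdjMatrix A)
    (hAtree : (SimpleGraph.fromRel (fun i j : Fin n => A i j ≠ 0)).IsTree)
    (hirr : Irreducible (A.charpoly.map (Int.castRingHom ℚ)))
    (B : Matrix (Fin n) (Fin n) ℤ) (hB : IsSignedAdjMatrix B)
    (h1 : B.charpoly = A.charpoly)
    (h2 : ((Matrix.of fun _ _ => (1 : ℤ)) - 1 - B).charpoly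
        = ((Matrix.of fun _ _ => (1 : ℤ)) - 1 - A).charpoly) :
    (SimpleGraph.fromRel (fun i j : Fin n => B i j ≠ 0)).IsTree :=
  stmt17_general A hA hAtree hirr B hB h1
end
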